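/- arXiv:2507.21658 — 10 statements merged into one kernel-verified Lean document; each statement's English description precedes it below -/
import Mathlib

section
/- Let n be a positive integer and let t, t', r be integers with gcd(r, n) = 1. (i) If gcd(t, n) = gcd(t', n), then κ(n, r, t) = κ(n, r, t'). (ii) If t divides t', then κ(n, r, t') divides κ(n, r, t), and κ(n, r, t) = κ(n, r, t') · gcd(κ(n, r, t)/|r|_n, t'/t). -/
/-- `|r|_m`: the multiplicative order of the integer `r` modulo `m`. -/
noncomputable def ordMod (m : ℕ) (r : ℤ) : ℕ := orderOf ((r : ZMod m))

/-- `S_m(x) := 1 + x + ⋯ + x^{m-1}`, with `S_0(x) := 0`. -/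
def Spoly (m : ℕ) (r : ℤ) : ℤ := ∑ i ∈ Finset.range m, r ^ i

/-- `κ(n,r,t) := n·|r|_n / gcd(n, t·S_{|r|_n}(r))`. -/
noncomputable def kappa (n : ℕ) (r t : ℤ) : ℕ :=
  n * ordMod n r / Int.gcd (n : ℤ) (t * Spoly (ordMod n r) r)

private lemma lemA (n a b : ℕ) : Nat.gcd n (a * b) = Nat.gcd n (Nat.gcd n a * b) := by
  apply Nat.dvd_antisymm
  · refine Nat.dvd_gcd (Nat.gcd_dvd_left _ _) ?_
    have h1 : Nat.gcd n (a * b) ∣ n * b := (Nat.gcd_dvd_left _ _).trans ⟨b, rfl⟩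
    have h2 : Nat.gcd n (a * b) ∣ a * b := Nat.gcd_dvd_right _ _
    have := Nat.dvd_gcd h1 h2
    rwa [Nat.gcd_mul_right] at this
  · exact Nat.dvd_gcd (Nat.gcd_dvd_left _ _)
      ((Nat.gcd_dvd_right _ _).trans (mul_dvd_mul_right (Nat.gcd_dvd_right n a) b))

private lemma lemB (n s m : ℕ) (hn : 0 < n) :
    Nat.gcd n (m * s) = Nat.gcd n s * Nat.gcd (n / Nat.gcd n s) m := by
  set g := Nat.gcd n s with hg
  have hgpos : 0 < g := Nat.gcd_pos_of_pos_left s hn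
  have hn' : g * (n / g) = n := Nat.mul_div_cancel' (Nat.gcd_dvd_left n s)
  have hs' : g * (s / g) = s := Nat.mul_div_cancel' (Nat.gcd_dvd_right n s)
  have hcop : Nat.Coprime (n / g) (s / g) := Nat.coprime_div_gcd_div_gcd hgpos
  calc Nat.gcd n (m * s) = Nat.gcd (g * (n / g)) (g * (m * (s / g))) := by
        rw [hn', mul_left_comm, hs']
    _ = g * Nat.gcd (n / g) (m * (s / g)) := Nat.gcd_mul_left _ _ _
    _ = g * Nat.gcd (n / g) m := by
        rw [Nat.Coprime.gcd_mul_right_cancel_right m hcop.symm]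

/-- Let `n` be a positive integer and `t, t', r` integers with `gcd(r,n)=1`.
(i) If `gcd(t,n) = gcd(t',n)` then `κ(n,r,t) = κ(n,r,t')`.
(ii) If `t ∣ t'` then `κ(n,r,t') ∣ κ(n,r,t)`, and
`κ(n,r,t) = κ(n,r,t') · gcd(κ(n,r,t)/|r|_n, t'/t)`. -/
theorem kappa_eq_of_gcd_eq_and_kappa_of_dvd (n : ℕ) (hn : 0 < n) (t t' r : ℤ)
    (hr : Int.gcd r (n : ℤ) = 1) :
    (Int.gcd t (n : ℤ) = Int.gcd t' (n : ℤ) → kappa n r t = kappa n r t') ∧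
    (t ∣ t' → kappa n r t' ∣ kappa n r t ∧
      kappa n r t = kappa n r t' *
        Int.gcd ((kappa n r t / ordMod n r : ℕ) : ℤ) (t' / t)) := by
  haveI : NeZero n := ⟨hn.ne'⟩
  set d := ordMod n r with hd
  set S := Spoly d r with hS
  -- d > 0
  have hdpos : 0 < d := by
    have hu : IsUnit ((r : ZMod n)) := by
      rw [← Int.isCoprime_iff_gcd_eq_one] at hr
      obtain ⟨u, v, huv⟩ := hr
      refine IsUnit.of_mul_eq_one ((u : ZMod n)) ?_
      have h1 : ((u * r + v * n : ℤ) : ZMod n) = 1 := by rw [huv]; norm_cast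
      push_cast at h1
      simp only [ZMod.natCast_self, mul_zero, add_zero] at h1
      rw [mul_comm]; exact h1
    rw [hd, ordMod, ← hu.unit_spec, orderOf_units]
    exact orderOf_pos hu.unit
  have key : ∀ u : ℤ, Int.gcd (n : ℤ) (u * S) = Nat.gcd n (u.natAbs * S.natAbs) := by
    intro u
    simp [Int.gcd, Int.natAbs_mul]
  constructor
  · intro hgcd
    have ht : Nat.gcd n t.natAbs = Nat.gcd n t'.natAbs := by
      have h1 : Int.gcd t (n : ℤ) = Nat.gcd n t.natAbs := by
        simp [Int.gcd, Nat.gcd_comm]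
      have h2 : Int.gcd t' (n : ℤ) = Nat.gcd n t'.natAbs := by
        simp [Int.gcd, Nat.gcd_comm]
      rw [h1, h2] at hgcd; exact hgcd
    show n * d / Int.gcd (n : ℤ) (t * S) = n * d / Int.gcd (n : ℤ) (t' * S)
    rw [key t, key t', lemA n t.natAbs, lemA n t'.natAbs, ht]
  · intro hdvd
    obtain ⟨m, hm⟩ := hdvd
    by_cases ht0 : t = 0
    · have ht'0 : t' = 0 := by rw [hm, ht0, zero_mul]
      subst ht'0; subst ht0
      refine ⟨dvd_rfl, ?_⟩
      have hk : kappa n r 0 = d := by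
        show n * d / Int.gcd (n : ℤ) (0 * S) = d
        rw [zero_mul, Int.gcd_zero_right]
        simp [Nat.mul_div_cancel_left d hn]
      rw [hk]
      simp [Nat.div_self hdpos]
    · -- main case
      have htq : t' / t = m := by rw [hm, Int.mul_ediv_cancel_left m ht0]
      set s := t.natAbs * S.natAbs with hsdef
      set g := Nat.gcd n s with hgdef
      have hgpos : 0 < g := Nat.gcd_pos_of_pos_left s hn
      have hgn : g ∣ n := Nat.gcd_dvd_left n s
      set X := Nat.gcd (n / g) m.natAbs with hXdef
      have hgX : Nat.gcd n (m.natAbs * s) = g * X := lemB n s m.natAbs hn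
      have hgXn : g * X ∣ n := hgX ▸ Nat.gcd_dvd_left n (m.natAbs * s)
      have hgXpos : 0 < g * X := Nat.pos_of_dvd_of_pos hgXn hn
      -- formulas for kappa
      have hkt : kappa n r t = (n / g) * d := by
        show n * d / Int.gcd (n : ℤ) (t * S) = (n / g) * d
        rw [key t, ← hsdef]
        refine Nat.div_eq_of_eq_mul_left hgpos ?_
        rw [mul_right_comm, Nat.div_mul_cancel hgn]
      have hkt' : kappa n r t' = (n / (g * X)) * d := by
        show n * d / Int.gcd (n : ℤ) (t' * S) = (n / (g * X)) * d
        have h2 : t'.natAbs * S.natAbs = m.natAbs * s := by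
          rw [hm, Int.natAbs_mul, hsdef]; ring
        rw [key t', h2, hgX]
        refine Nat.div_eq_of_eq_mul_left hgXpos ?_
        rw [mul_right_comm, Nat.div_mul_cancel hgXn]
      have hdivchain : n / g = (n / (g * X)) * X := by
        refine Nat.div_eq_of_eq_mul_left hgpos ?_
        rw [mul_assoc, mul_comm X g, Nat.div_mul_cancel hgXn]
      have hmain : kappa n r t = kappa n r t' * X := by
        rw [hkt, hkt', hdivchain]; ring
      refine ⟨⟨X, hmain⟩, ?_⟩
      have hko : kappa n r t / d = n / g := by
        rw [hkt, Nat.mul_div_cancel _ hdpos]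
      rw [hko, htq]
      have hcast : Int.gcd ((n / g : ℕ) : ℤ) m = X := by
        rw [Int.gcd, Int.natAbs_natCast, hXdef]
      rw [hcast, hmain]
end

section
/- Let n, m, d be positive integers with n = dm and gcd(d, m) = 1, and let r, t be integers with gcd(r, n) = 1. Then κ(n, r, t) = |r|_n · κ(d, r, t) · κ(m, r, t) / ( gcd(κ(d, r, t), |r|_n) · gcd(κ(m, r, t), |r|_n) ). In particular, κ(d, r, t) divides κ(n, r, t). -/
lemma geom_sum_mul_order {R : Type*} [CommRing R] (x : R) (e : ℕ) (hx : x ^ e = 1) (j : ℕ) :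
    ∑ i ∈ Finset.range (e * j), x ^ i = (j : R) * ∑ i ∈ Finset.range e, x ^ i := by
  induction j with
  | zero => simp
  | succ j ih =>
      rw [Nat.mul_succ, Finset.sum_range_add, ih]
      have : ∑ i ∈ Finset.range e, x ^ (e * j + i) = ∑ i ∈ Finset.range e, x ^ i := by
        refine Finset.sum_congr rfl fun i _ => ?_
        rw [pow_add, pow_mul, hx, one_pow, one_mul]
      rw [this]; push_cast; ring

lemma ordMod_dvd_iff (n : ℕ) (r : ℤ) (k : ℕ) :
    ordMod n r ∣ k ↔ (n : ℤ) ∣ r ^ k - 1 := by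
  rw [ordMod, orderOf_dvd_iff_pow_eq_one, ← ZMod.intCast_zmod_eq_zero_iff_dvd]
  push_cast
  rw [sub_eq_zero]

lemma isUnit_cast (n : ℕ) (r : ℤ) (hr : Int.gcd r (n : ℤ) = 1) : IsUnit ((r : ZMod n)) := by
  obtain ⟨u, v, huv⟩ := Int.isCoprime_iff_gcd_eq_one.mpr hr
  have : ((u * r + v * n : ℤ) : ZMod n) = 1 := by rw [huv]; norm_cast
  push_cast at this
  rw [ZMod.natCast_self, mul_zero, add_zero] at this
  exact IsUnit.of_mul_eq_one _ (by rw [mul_comm]; exact this)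

lemma ordMod_pos (n : ℕ) (hn : 0 < n) (r : ℤ) (hr : Int.gcd r (n : ℤ) = 1) :
    0 < ordMod n r := by
  haveI : NeZero n := ⟨hn.ne'⟩
  obtain ⟨u, hu⟩ := isUnit_cast n r hr
  have : ordMod n r = orderOf u := by rw [ordMod, ← hu, orderOf_units]
  rw [this]
  exact orderOf_pos u

lemma gcd_spoly_dvd (n : ℕ) (r t : ℤ) :
    Int.gcd (n : ℤ) (t * Spoly (ordMod n r) r) ∣ n := by
  have h : ((Int.gcd (n : ℤ) (t * Spoly (ordMod n r) r) : ℕ) : ℤ) ∣ (n : ℤ) :=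
    Int.gcd_dvd_left _ _
  exact_mod_cast h

lemma kappa_spec (n : ℕ) (r t : ℤ) :
    ∃ c, c ∣ n ∧ kappa n r t = ordMod n r * c := by
  refine ⟨n / Int.gcd (n : ℤ) (t * Spoly (ordMod n r) r),
    Nat.div_dvd_of_dvd (gcd_spoly_dvd n r t), ?_⟩
  rw [kappa, mul_comm n _, Nat.mul_div_assoc _ (gcd_spoly_dvd n r t)]

lemma kappa_pos (n : ℕ) (hn : 0 < n) (r t : ℤ) (hr : Int.gcd r (n : ℤ) = 1) :
    0 < kappa n r t := by
  obtain ⟨c, hc, hk⟩ := kappa_spec n r t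
  rw [hk]
  exact Nat.mul_pos (ordMod_pos n hn r hr) (Nat.pos_of_dvd_of_pos hc hn)

lemma kappa_dvd_iff (n : ℕ) (hn : 0 < n) (r t : ℤ) (hr : Int.gcd r (n : ℤ) = 1) (k : ℕ) :
    kappa n r t ∣ k ↔ (ordMod n r ∣ k ∧ (n : ℤ) ∣ t * Spoly k r) := by
  set e := ordMod n r with he
  have hepos : 0 < e := ordMod_pos n hn r hr
  set G := Int.gcd (n : ℤ) (t * Spoly e r) with hG
  have hGn : G ∣ n := gcd_spoly_dvd n r t
  have hGpos : 0 < G := Nat.pos_of_dvd_of_pos hGn hn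
  have hkap : kappa n r t = e * (n / G) := by
    rw [kappa, ← he, ← hG, mul_comm n e, Nat.mul_div_assoc _ hGn]
  have hx : ((r : ZMod n)) ^ e = 1 := pow_orderOf_eq_one _
  have hcong : ∀ j : ℕ, ((n : ℤ) ∣ t * Spoly (e * j) r ↔ (n : ℤ) ∣ (j : ℤ) * (t * Spoly e r)) := by
    intro j
    rw [← ZMod.intCast_zmod_eq_zero_iff_dvd, ← ZMod.intCast_zmod_eq_zero_iff_dvd]
    have h2 : ((Spoly (e * j) r : ℤ) : ZMod n) = (j : ZMod n) * ((Spoly e r : ℤ) : ZMod n) := by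
      simp only [Spoly]
      push_cast
      exact geom_sum_mul_order _ e hx j
    push_cast
    rw [h2]
    constructor <;> intro h <;> [rw [← h]; rw [← h]] <;> ring
  have hGdvd : (G : ℤ) ∣ t * Spoly e r := Int.gcd_dvd_right _ _
  constructor
  · rintro hκk
    have hek : e ∣ k := dvd_trans (by rw [hkap]; exact dvd_mul_right _ _) hκk
    obtain ⟨j, rfl⟩ := hek
    refine ⟨dvd_mul_right _ _, ?_⟩
    rw [hcong j]
    rw [hkap] at hκk
    have hj : n / G ∣ j := (mul_dvd_mul_iff_left hepos.ne').mp hκk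
    obtain ⟨j', rfl⟩ := hj
    obtain ⟨s, hs⟩ := hGdvd
    refine ⟨(j' : ℤ) * s, ?_⟩
    have hGn' : ((n / G : ℕ) : ℤ) * (G : ℤ) = (n : ℤ) := by
      exact_mod_cast congrArg (Nat.cast : ℕ → ℤ) (Nat.div_mul_cancel hGn)
    rw [hs, Nat.cast_mul]
    calc ((n / G : ℕ) : ℤ) * (j' : ℤ) * ((G : ℤ) * s)
        = (((n / G : ℕ) : ℤ) * (G : ℤ)) * ((j' : ℤ) * s) := by ring
      _ = (n : ℤ) * ((j' : ℤ) * s) := by rw [hGn']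
  · rintro ⟨hek, hnk⟩
    obtain ⟨j, rfl⟩ := hek
    rw [hcong j] at hnk
    -- show (n / G) ∣ j
    have hG0 : (G : ℤ) ≠ 0 := by exact_mod_cast hGpos.ne'
    obtain ⟨q, hq⟩ := hGdvd
    have h1 : (n : ℤ) = (G : ℤ) * ((n / G : ℕ) : ℤ) := by
      exact_mod_cast congrArg (Nat.cast : ℕ → ℤ) (Nat.mul_div_cancel' hGn).symm
    have hcop : IsCoprime (((n / G : ℕ)) : ℤ) q := by
      rw [Int.isCoprime_iff_gcd_eq_one]
      have hq' : (t * Spoly e r) / (G : ℤ) = q := by rw [hq]; exact Int.mul_ediv_cancel_left _ hG0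
      have hn' : (n : ℤ) / (G : ℤ) = ((n / G : ℕ) : ℤ) := by
        rw [h1]; exact Int.mul_ediv_cancel_left _ hG0
      have hGg : (G : ℤ) = (Int.gcd (n : ℤ) (t * Spoly e r) : ℤ) := by rw [hG]
      have := Int.gcd_div_gcd_div_gcd (i := (n : ℤ)) (j := t * Spoly e r)
        (by rw [← hG]; exact_mod_cast hGpos)
      rwa [← hGg, hn', hq'] at this
    have hstep : ((n / G : ℕ) : ℤ) ∣ (j : ℤ) * q := by
      rw [h1, hq] at hnk
      have h2 : (j : ℤ) * ((G : ℤ) * q) = (G : ℤ) * ((j : ℤ) * q) := by ring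
      rw [h2] at hnk
      exact (mul_dvd_mul_iff_left hG0).mp hnk
    have hj : ((n / G : ℕ) : ℤ) ∣ (j : ℤ) := hcop.dvd_of_dvd_mul_right hstep
    have hjn : n / G ∣ j := by exact_mod_cast hj
    rw [hkap]
    exact mul_dvd_mul_left e hjn

lemma factorization_le_of_dvd {a b : ℕ} (ha : a ≠ 0) (hb : b ≠ 0) (h : a ∣ b) (p : ℕ) :
    a.factorization p ≤ b.factorization p :=
  (Nat.factorization_le_iff_dvd ha hb).mpr h p

lemma gcd_dvd_aux {a b e cd cm ed em : ℕ} (he : e ≠ 0)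
    (h1 : a = ed * cd) (h2 : b = em * cm) (hcd0 : cd ≠ 0) (hcm0 : cm ≠ 0)
    (hed0 : ed ≠ 0) (hem0 : em ≠ 0)
    (hcop : Nat.gcd cd cm = 1) (hde : ed ∣ e) (hme : em ∣ e) :
    Nat.gcd a b ∣ e := by
  have ha : a ≠ 0 := by rw [h1]; exact Nat.mul_ne_zero hed0 hcd0
  have hb : b ≠ 0 := by rw [h2]; exact Nat.mul_ne_zero hem0 hcm0
  rw [← Nat.factorization_le_iff_dvd (Nat.gcd_ne_zero_left ha) he]
  intro p
  have hg : (Nat.gcd a b).factorization p = min (a.factorization p) (b.factorization p) := by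
    rw [Nat.factorization_gcd ha hb, Finsupp.inf_apply]
  have hc : min (cd.factorization p) (cm.factorization p) = 0 := by
    have : (Nat.gcd cd cm).factorization p = 0 := by rw [hcop]; simp
    rwa [Nat.factorization_gcd hcd0 hcm0, Finsupp.inf_apply] at this
  have hae : a.factorization p = ed.factorization p + cd.factorization p := by
    rw [h1, Nat.factorization_mul hed0 hcd0, Finsupp.add_apply]
  have hbe : b.factorization p = em.factorization p + cm.factorization p := by
    rw [h2, Nat.factorization_mul hem0 hcm0, Finsupp.add_apply]
  have hd := factorization_le_of_dvd hed0 he hde p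
  have hm := factorization_le_of_dvd hem0 he hme p
  omega

lemma lcm_arith {a b e : ℕ} (ha : a ≠ 0) (hb : b ≠ 0) (he : e ≠ 0)
    (h1 : Nat.gcd a b ∣ e) (h2 : e ∣ Nat.lcm a b) :
    Nat.lcm a b * (Nat.gcd a e * Nat.gcd b e) = e * a * b := by
  have hlcm : Nat.lcm a b ≠ 0 := Nat.lcm_ne_zero ha hb
  have hga : Nat.gcd a e ≠ 0 := Nat.gcd_ne_zero_left ha
  have hgb : Nat.gcd b e ≠ 0 := Nat.gcd_ne_zero_left hb
  apply Nat.eq_of_factorization_eq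
  · exact Nat.mul_ne_zero hlcm (Nat.mul_ne_zero hga hgb)
  · exact Nat.mul_ne_zero (Nat.mul_ne_zero he ha) hb
  intro p
  have h1' := factorization_le_of_dvd (Nat.gcd_ne_zero_left ha) he h1 p
  have h2' := factorization_le_of_dvd he hlcm h2 p
  rw [Nat.factorization_gcd ha hb, Finsupp.inf_apply] at h1'
  rw [Nat.factorization_lcm ha hb, Finsupp.sup_apply] at h2'
  rw [Nat.factorization_mul hlcm (Nat.mul_ne_zero hga hgb),
    Nat.factorization_mul hga hgb,
    Nat.factorization_mul (Nat.mul_ne_zero he ha) hb,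
    Nat.factorization_mul he ha,
    Nat.factorization_lcm ha hb, Nat.factorization_gcd ha he, Nat.factorization_gcd hb he]
  simp only [Finsupp.add_apply, Finsupp.inf_apply, Finsupp.sup_apply]
  omega

/-- Let `n, m, d` be positive integers with `n = dm` and `gcd(d,m) = 1`, and
let `r, t` be integers with `gcd(r,n) = 1`. Then
`κ(n,r,t) = |r|_n·κ(d,r,t)·κ(m,r,t) / (gcd(κ(d,r,t),|r|_n)·gcd(κ(m,r,t),|r|_n))`.
In particular `κ(d,r,t)` divides `κ(n,r,t)`. -/
theorem kappa_eq_of_coprime_factorization (n m d : ℕ) (hn : 0 < n) (hm : 0 < m) (hd : 0 < d)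
    (hnm : n = d * m) (hco : Nat.gcd d m = 1) (r t : ℤ) (hr : Int.gcd r (n : ℤ) = 1) :
    kappa n r t = ordMod n r * kappa d r t * kappa m r t /
        (Nat.gcd (kappa d r t) (ordMod n r) * Nat.gcd (kappa m r t) (ordMod n r)) ∧
    kappa d r t ∣ kappa n r t := by
  have hdn : (d : ℤ) ∣ (n : ℤ) := by exact_mod_cast (Dvd.intro m hnm.symm : d ∣ n)
  have hmn : (m : ℤ) ∣ (n : ℤ) := by exact_mod_cast (Dvd.intro_left d hnm.symm : m ∣ n)
  have hrd : Int.gcd r (d : ℤ) = 1 :=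
    Nat.dvd_one.mp (hr ▸ Int.gcd_dvd_gcd_of_dvd_right _ hdn)
  have hrm : Int.gcd r (m : ℤ) = 1 :=
    Nat.dvd_one.mp (hr ▸ Int.gcd_dvd_gcd_of_dvd_right _ hmn)
  have hcopZ : IsCoprime (d : ℤ) (m : ℤ) := by
    rw [Int.isCoprime_iff_gcd_eq_one, Int.gcd_natCast_natCast]; exact hco
  have hsplit : ∀ x : ℤ, ((n : ℤ) ∣ x ↔ ((d : ℤ) ∣ x ∧ (m : ℤ) ∣ x)) := by
    intro x
    constructor
    · intro h; exact ⟨dvd_trans hdn h, dvd_trans hmn h⟩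
    · rintro ⟨h1, h2⟩
      have := hcopZ.mul_dvd h1 h2
      rwa [hnm, Nat.cast_mul]
  have hord_iff : ∀ k, (ordMod n r ∣ k ↔ (ordMod d r ∣ k ∧ ordMod m r ∣ k)) := by
    intro k
    rw [ordMod_dvd_iff, ordMod_dvd_iff, ordMod_dvd_iff, hsplit]
  have hk_iff : ∀ k, (kappa n r t ∣ k ↔ (kappa d r t ∣ k ∧ kappa m r t ∣ k)) := by
    intro k
    rw [kappa_dvd_iff n hn r t hr, kappa_dvd_iff d hd r t hrd, kappa_dvd_iff m hm r t hrm,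
      hord_iff, hsplit]
    tauto
  set a := kappa d r t
  set b := kappa m r t
  set e := ordMod n r
  have hlcm : kappa n r t = Nat.lcm a b := by
    apply Nat.dvd_antisymm
    · exact (hk_iff _).mpr ⟨Nat.dvd_lcm_left _ _, Nat.dvd_lcm_right _ _⟩
    · obtain ⟨h1, h2⟩ := (hk_iff (kappa n r t)).mp dvd_rfl
      exact Nat.lcm_dvd h1 h2
  have hdvd : a ∣ kappa n r t := by rw [hlcm]; exact Nat.dvd_lcm_left _ _
  refine ⟨?_, hdvd⟩
  -- positivity
  have hepos : 0 < e := ordMod_pos n hn r hr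
  have ha0 : a ≠ 0 := (kappa_pos d hd r t hrd).ne'
  have hb0 : b ≠ 0 := (kappa_pos m hm r t hrm).ne'
  obtain ⟨cd, hcdd, hcda⟩ := kappa_spec d r t
  obtain ⟨cm, hcmm, hcmb⟩ := kappa_spec m r t
  have hedpos : 0 < ordMod d r := ordMod_pos d hd r hrd
  have hempos : 0 < ordMod m r := ordMod_pos m hm r hrm
  have hcd0 : cd ≠ 0 := (Nat.pos_of_dvd_of_pos hcdd hd).ne'
  have hcm0 : cm ≠ 0 := (Nat.pos_of_dvd_of_pos hcmm hm).ne'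
  have hcop' : Nat.gcd cd cm = 1 :=
    Nat.Coprime.coprime_dvd_left hcdd (Nat.Coprime.coprime_dvd_right hcmm hco)
  have hede : ordMod d r ∣ e := by
    rw [ordMod_dvd_iff]
    exact dvd_trans hdn ((ordMod_dvd_iff n r e).mp dvd_rfl)
  have heme : ordMod m r ∣ e := by
    rw [ordMod_dvd_iff]
    exact dvd_trans hmn ((ordMod_dvd_iff n r e).mp dvd_rfl)
  have hgab : Nat.gcd a b ∣ e :=
    gcd_dvd_aux hepos.ne' hcda hcmb hcd0 hcm0 hedpos.ne' hempos.ne' hcop' hede heme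
  have helcm : e ∣ Nat.lcm a b := by
    rw [← hlcm]
    obtain ⟨c, _, hc⟩ := kappa_spec n r t
    rw [hc]; exact dvd_mul_right _ _
  have key : Nat.lcm a b * (Nat.gcd a e * Nat.gcd b e) = e * a * b :=
    lcm_arith ha0 hb0 hepos.ne' hgab helcm
  rw [hlcm]
  refine (Nat.div_eq_of_eq_mul_left ?_ ?_).symm
  · exact Nat.mul_pos (Nat.gcd_pos_of_pos_right _ hepos) (Nat.gcd_pos_of_pos_right _ hepos)
  · rw [← key]
end

section
/- Let n be a positive integer and let a_{n,r,t} be the automorphism of the dihedral group D_{2n} determined by integers r, t with gcd(r, n) = 1. Then |r|_n divides the order of a_{n,r,t}, and the order of a_{n,r,t} equals n·|r|_n / gcd(n, t·S_{|r|_n}(r)) = κ(n, r, t). In particular, t·S_{κ(n,r,t)}(r) ≡ 0 (mod n), and if gcd(r − 1, n) = 1 then the order of a_{n,r,t} equals |r|_n. -/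
/-- The map `a_{n,r,t}` on the dihedral group `D_{2n}`, sending `u^i ↦ u^{ri}` and
`u^j v ↦ u^{rj+t} v`. (In Mathlib's `DihedralGroup`, with `u := r 1` and `v := sr 0`, one has
`u^j * v = sr (-j)`, so this map is `r i ↦ r (r·i)`, `sr j ↦ sr (r·j - t)`.) -/
def dihedralAut (n : ℕ) (r t : ℤ) : DihedralGroup n → DihedralGroup n
  | DihedralGroup.r i => DihedralGroup.r ((r : ZMod n) * i)
  | DihedralGroup.sr j => DihedralGroup.sr ((r : ZMod n) * j - (t : ZMod n))

/-- `a_{n,r,t}` as an element of the monoid of self-maps of `D_{2n}` (so that its order,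
as a permutation of `D_{2n}`, makes sense). -/
def dihedralAutEnd (n : ℕ) (r t : ℤ) : Function.End (DihedralGroup n) := dihedralAut n r t

lemma pow_apply_r (n : ℕ) (r t : ℤ) (k : ℕ) (i : ZMod n) :
    ((dihedralAutEnd n r t)^k) (DihedralGroup.r i) = DihedralGroup.r ((r : ZMod n)^k * i) := by
  induction k generalizing i with
  | zero => simp; rfl
  | succ k ih =>
    rw [pow_succ]
    show ((dihedralAutEnd n r t)^k) (dihedralAut n r t (DihedralGroup.r i)) = _
    rw [show dihedralAut n r t (DihedralGroup.r i) = DihedralGroup.r ((r : ZMod n) * i) from rfl,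
      ih]
    congr 1; ring

lemma pow_apply_sr (n : ℕ) (r t : ℤ) (k : ℕ) (j : ZMod n) :
    ((dihedralAutEnd n r t)^k) (DihedralGroup.sr j)
      = DihedralGroup.sr ((r : ZMod n)^k * j - (t : ZMod n) * ∑ i ∈ Finset.range k, (r : ZMod n)^i) := by
  induction k generalizing j with
  | zero => simp; rfl
  | succ k ih =>
    rw [pow_succ]
    show ((dihedralAutEnd n r t)^k) (dihedralAut n r t (DihedralGroup.sr j)) = _
    rw [show dihedralAut n r t (DihedralGroup.sr j)
        = DihedralGroup.sr ((r : ZMod n) * j - (t : ZMod n)) from rfl, ih,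
      Finset.sum_range_succ]
    congr 1; ring

lemma dihedralAutEnd_pow_eq_one_iff (n : ℕ) (r t : ℤ) (k : ℕ) :
    (dihedralAutEnd n r t)^k = 1 ↔
      ((r : ZMod n)^k = 1 ∧ (n : ℤ) ∣ t * Spoly k r) := by
  have hcast : ((t * Spoly k r : ℤ) : ZMod n)
      = (t : ZMod n) * ∑ i ∈ Finset.range k, (r : ZMod n)^i := by
    push_cast [Spoly]; ring
  rw [← ZMod.intCast_zmod_eq_zero_iff_dvd, hcast]
  constructor
  · intro h
    constructor
    · have := congrFun h (DihedralGroup.r 1)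
      rw [pow_apply_r] at this
      simpa using DihedralGroup.r.inj this
    · have := congrFun h (DihedralGroup.sr 0)
      rw [pow_apply_sr] at this
      have := DihedralGroup.sr.inj this
      simp only [mul_zero, zero_mul, zero_sub, neg_eq_zero] at this
      simpa using this
  · rintro ⟨h1, h2⟩
    funext x
    cases x with
    | r i => rw [pow_apply_r, h1, one_mul]; rfl
    | sr j => rw [pow_apply_sr, h1, h2, one_mul, sub_zero]; rfl

lemma spoly_mul_cast (n d m : ℕ) (r : ℤ) (h : (r : ZMod n)^d = 1) :
    ((Spoly (d*m) r : ℤ) : ZMod n) = (m : ZMod n) * ((Spoly d r : ℤ) : ZMod n) := by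
  have key : ∀ m : ℕ, (∑ i ∈ Finset.range (d*m), (r : ZMod n)^i)
      = (m : ZMod n) * ∑ i ∈ Finset.range d, (r : ZMod n)^i := by
    intro m
    induction m with
    | zero => simp
    | succ m ih =>
      rw [Nat.mul_succ, Finset.sum_range_add, ih]
      have : ∀ i : ℕ, (r : ZMod n)^(d*m + i) = (r : ZMod n)^i := by
        intro i; rw [pow_add, pow_mul, h, one_pow, one_mul]
      rw [Finset.sum_congr rfl (fun i _ => this i)]
      push_cast; ring
  have c1 : ((Spoly (d*m) r : ℤ) : ZMod n) = ∑ i ∈ Finset.range (d*m), (r : ZMod n)^i := by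
    push_cast [Spoly]; rfl
  have c2 : ((Spoly d r : ℤ) : ZMod n) = ∑ i ∈ Finset.range d, (r : ZMod n)^i := by
    push_cast [Spoly]; rfl
  rw [c1, c2, key]

lemma dvd_spoly_mul_iff (n d m : ℕ) (r t : ℤ) (h : (r : ZMod n)^d = 1) :
    (n : ℤ) ∣ t * Spoly (d*m) r ↔ (n : ℤ) ∣ (m : ℤ) * (t * Spoly d r) := by
  rw [← ZMod.intCast_zmod_eq_zero_iff_dvd, ← ZMod.intCast_zmod_eq_zero_iff_dvd]
  push_cast
  rw [spoly_mul_cast n d m r h]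
  constructor <;> intro hh <;> [skip; skip] <;> linear_combination hh

lemma nat_div_gcd_dvd (N A m : ℕ) (hN : 0 < N) (h : N ∣ m * A) : N / Nat.gcd N A ∣ m := by
  set g := Nat.gcd N A with hgdef
  have hg : 0 < g := Nat.gcd_pos_of_pos_left _ hN
  have cop : Nat.Coprime (N/g) (A/g) := Nat.coprime_div_gcd_div_gcd hg
  obtain ⟨c, hc⟩ := h
  have key : m * (A/g) = (N/g) * c := by
    apply Nat.eq_of_mul_eq_mul_right hg
    rw [mul_assoc, Nat.div_mul_cancel (Nat.gcd_dvd_right N A),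
      mul_right_comm, Nat.div_mul_cancel (Nat.gcd_dvd_left N A), ← hc]
  exact cop.dvd_of_dvd_mul_right ⟨c, key⟩


/-- Let `a_{n,r,t}` be the automorphism of `D_{2n}` determined by integers
`r, t` with `gcd(r,n) = 1`. Then `|r|_n` divides the order of `a_{n,r,t}`, and the order of
`a_{n,r,t}` equals `n·|r|_n / gcd(n, t·S_{|r|_n}(r)) = κ(n,r,t)`. In particular
`t·S_{κ(n,r,t)}(r) ≡ 0 (mod n)`, and if `gcd(r-1,n) = 1` then the order of `a_{n,r,t}`
equals `|r|_n`. -/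
theorem orderOf_dihedralAut (n : ℕ) (hn : 0 < n) (r t : ℤ) (hr : Int.gcd r (n : ℤ) = 1) :
    ordMod n r ∣ orderOf (dihedralAutEnd n r t) ∧
    orderOf (dihedralAutEnd n r t)
        = n * ordMod n r / Int.gcd (n : ℤ) (t * Spoly (ordMod n r) r) ∧
    orderOf (dihedralAutEnd n r t) = kappa n r t ∧
    (n : ℤ) ∣ t * Spoly (kappa n r t) r ∧
    (Int.gcd (r - 1) (n : ℤ) = 1 → orderOf (dihedralAutEnd n r t) = ordMod n r) := by
  haveI : NeZero n := ⟨hn.ne'⟩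
  set ρ : ZMod n := (r : ZMod n) with hρ
  set d : ℕ := ordMod n r with hd
  -- ρ is a unit, hence d > 0
  have hunit : IsUnit ρ := by
    have hcop : IsCoprime r (n : ℤ) := Int.isCoprime_iff_gcd_eq_one.mpr hr
    have h2 := hcop.map (Int.castRingHom (ZMod n))
    have h0 : (((n : ℤ)) : ZMod n) = 0 := by push_cast; exact ZMod.natCast_self n
    have h3 : IsCoprime ρ (0 : ZMod n) := by
      simpa [hρ, h0] using h2
    exact isCoprime_zero_right.mp h3
  have hdpos : 0 < d := by
    obtain ⟨u, hu⟩ := hunit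
    have : orderOf ρ = orderOf u := by rw [← hu, orderOf_units]
    rw [hd, ordMod, ← hρ, this]
    exact orderOf_pos u
  have hρd : ρ ^ d = 1 := pow_orderOf_eq_one ρ
  set Sd : ℤ := Spoly d r with hSd
  set g : ℕ := Int.gcd (n : ℤ) (t * Sd) with hg
  have hgdvdn : g ∣ n := Int.ofNat_dvd.mp (by
    simpa using (Int.gcd_dvd_left _ _ : ((Int.gcd (n : ℤ) (t * Sd) : ℤ)) ∣ (n : ℤ)))
  have hgpos : 0 < g := Nat.pos_of_ne_zero (by
    intro h0
    rw [hg] at h0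
    have := Int.gcd_eq_zero_iff.mp h0
    exact_mod_cast hn.ne' (by exact_mod_cast this.1))
  set e : ℕ := n / g with he
  have hegn : e * g = n := Nat.div_mul_cancel hgdvdn
  have hκ : kappa n r t = e * d := by
    rw [kappa, ← hd, ← hSd, ← hg, ← hegn, mul_comm e g, mul_assoc,
      Nat.mul_div_cancel_left _ hgpos]
  have hκ2 : n * d / g = e * d := by
    rw [← hegn, mul_comm e g, mul_assoc, Nat.mul_div_cancel_left _ hgpos]
  -- the key divisibility characterization
  have hiff : ∀ k : ℕ, (dihedralAutEnd n r t)^k = 1 ↔ (e * d) ∣ k := by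
    intro k
    rw [dihedralAutEnd_pow_eq_one_iff]
    constructor
    · rintro ⟨h1, h2⟩
      have hdk : d ∣ k := orderOf_dvd_of_pow_eq_one (by rw [← hρ]; exact h1)
      obtain ⟨m, hm⟩ := hdk
      rw [hm] at h2
      rw [dvd_spoly_mul_iff n d m r t hρd] at h2
      -- derive e ∣ m
      have hnat : n ∣ m * (t * Sd).natAbs := by
        have := Int.natAbs_dvd_natAbs.mpr h2
        simpa [Int.natAbs_mul] using this
      have hem : n / Nat.gcd n (t * Sd).natAbs ∣ m := nat_div_gcd_dvd n _ m hn hnat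
      have hge : e = n / Nat.gcd n (t * Sd).natAbs := by
        rw [he, hg]; norm_num [Int.gcd]
      rw [← hge] at hem
      obtain ⟨m', rfl⟩ := hem
      exact ⟨m', by rw [hm]; ring⟩
    · rintro ⟨c, rfl⟩
      constructor
      · rw [← hρ, show e * d * c = d * (e * c) by ring, pow_mul, hρd, one_pow]
      · rw [show e * d * c = d * (e * c) by ring,
          dvd_spoly_mul_iff n d (e * c) r t hρd]
        have hgd : (g : ℤ) ∣ t * Sd := Int.gcd_dvd_right _ _
        obtain ⟨c', hc'⟩ := hgd
        refine ⟨c' * c, ?_⟩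
        push_cast
        rw [hc']
        have : ((e : ℤ)) * g = n := by exact_mod_cast hegn
        linear_combination (c : ℤ) * c' * this
  -- conclude
  have hpow : (dihedralAutEnd n r t) ^ (e * d) = 1 := (hiff _).mpr dvd_rfl
  have hedpos : 0 < e * d := Nat.mul_pos (Nat.div_pos (Nat.le_of_dvd hn hgdvdn) hgpos) hdpos
  have hfin : IsOfFinOrder (dihedralAutEnd n r t) :=
    isOfFinOrder_iff_pow_eq_one.mpr ⟨e * d, hedpos, hpow⟩
  have h1 : orderOf (dihedralAutEnd n r t) ∣ e * d := orderOf_dvd_of_pow_eq_one hpow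
  have h2 : e * d ∣ orderOf (dihedralAutEnd n r t) :=
    (hiff _).mp (pow_orderOf_eq_one _)
  have hord : orderOf (dihedralAutEnd n r t) = e * d := Nat.dvd_antisymm h1 h2
  refine ⟨?_, ?_, ?_, ?_, ?_⟩
  · rw [hord]; exact Dvd.dvd.mul_left dvd_rfl e
  · rw [hord, hκ2]
  · rw [hord, hκ]
  · have := (hiff (kappa n r t)).mpr (by rw [hκ])
    exact ((dihedralAutEnd_pow_eq_one_iff n r t _).mp this).2
  · intro hcop1
    have hcop : IsCoprime (r - 1) (n : ℤ) := Int.isCoprime_iff_gcd_eq_one.mpr hcop1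
    have hdvdSd : (n : ℤ) ∣ Sd := by
      have hgeom : Sd * (r - 1) = r ^ d - 1 := geom_sum_mul r d
      have hpd : (n : ℤ) ∣ r ^ d - 1 := by
        have : ((r ^ d - 1 : ℤ) : ZMod n) = 0 := by
          push_cast
          rw [← hρ, hρd, sub_self]
        exact (ZMod.intCast_zmod_eq_zero_iff_dvd _ _).mp this
      exact hcop.symm.dvd_of_dvd_mul_right (hgeom ▸ hpd)
    have hge1 : g = n := by
      have hnd : (n : ℤ) ∣ t * Sd := Dvd.dvd.mul_left hdvdSd t
      refine Nat.dvd_antisymm hgdvdn (Int.ofNat_dvd.mp ?_)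
      exact_mod_cast Int.dvd_gcd dvd_rfl hnd
    rw [hord]
    have : e = 1 := by rw [he, hge1, Nat.div_self hn]
    rw [this, one_mul]
end

section
/- Let n be a positive integer and let t, y, r, x be integers with gcd(r, n) = 1 = gcd(x, n). Then κ(n, r, t) = κ(n, r, (1 − r)y + xt), and gcd(n, t·S_{|r|_n}(r)) = gcd(n, ((1 − r)y + xt)·S_{|r|_n}(r)). -/
/-- Let `n` be a positive integer and `t, y, r, x` integers with
`gcd(r,n) = 1 = gcd(x,n)`. Then `κ(n,r,t) = κ(n,r,(1-r)y + xt)` and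
`gcd(n, t·S_{|r|_n}(r)) = gcd(n, ((1-r)y + xt)·S_{|r|_n}(r))`. -/
theorem kappa_invariant_under_conjugation (n : ℕ) (hn : 0 < n) (t y r x : ℤ)
    (hr : Int.gcd r (n : ℤ) = 1) (hx : Int.gcd x (n : ℤ) = 1) :
    kappa n r t = kappa n r ((1 - r) * y + x * t) ∧
    Int.gcd (n : ℤ) (t * Spoly (ordMod n r) r)
      = Int.gcd (n : ℤ) (((1 - r) * y + x * t) * Spoly (ordMod n r) r) := by
  set m := ordMod n r with hm
  set S := Spoly m r with hS
  -- n ∣ (1 - r) * S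
  have hpow : ((r : ZMod n)) ^ m = 1 := pow_orderOf_eq_one _
  have hdvd : (n : ℤ) ∣ (1 - r) * S := by
    have h1 : (n : ℤ) ∣ r ^ m - 1 := by
      have : ((r ^ m - 1 : ℤ) : ZMod n) = 0 := by push_cast [hpow]; ring
      exact (ZMod.intCast_zmod_eq_zero_iff_dvd _ _).mp this
    have h2 : (1 - r) * S = -(r ^ m - 1) := by
      have := geom_sum_mul r m
      rw [hS, Spoly]; linear_combination -this
    rw [h2]; exact h1.neg_right
  have hxcop : IsCoprime x (n : ℤ) := Int.isCoprime_iff_gcd_eq_one.mpr hx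
  have key : Int.gcd (n : ℤ) (t * S) = Int.gcd (n : ℤ) (((1 - r) * y + x * t) * S) := by
    apply Nat.dvd_antisymm
    · rw [← Int.natCast_dvd_natCast]
      apply Int.dvd_coe_gcd (Int.gcd_dvd_left _ _)
      have e : ((1 - r) * y + x * t) * S = ((1 - r) * S) * y + x * (t * S) := by ring
      rw [e]
      exact dvd_add (((Int.gcd_dvd_left _ _).trans hdvd).mul_right y)
        ((Int.gcd_dvd_right _ _).mul_left x)
    · rw [← Int.natCast_dvd_natCast]
      apply Int.dvd_coe_gcd (Int.gcd_dvd_left _ _)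
      have e : x * (t * S) = (((1 - r) * y + x * t) * S) - ((1 - r) * S) * y := by ring
      have hg : ((Int.gcd (n : ℤ) (((1 - r) * y + x * t) * S) : ℤ)) ∣ x * (t * S) := by
        rw [e]
        exact dvd_sub (Int.gcd_dvd_right _ _) (((Int.gcd_dvd_left _ _).trans hdvd).mul_right y)
      have hcop : IsCoprime x ((Int.gcd (n : ℤ) (((1 - r) * y + x * t) * S) : ℤ)) :=
        hxcop.of_isCoprime_of_dvd_right (Int.gcd_dvd_left _ _)
      exact hcop.symm.dvd_of_dvd_mul_left hg
  exact ⟨by rw [kappa, kappa, ← hm, ← hS, key], key⟩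
end

section
/- Let n > 1 be an integer, let a_{n,r,t} be the automorphism of D_{2n} determined by integers r, t with gcd(r, n) = 1, and let d > 1 be a divisor of n. Then c(U_n(d), a_{n,r,t}) = c(U_n(d), a_{n,r,0}) = φ(d)/|r|_d, and consequently c(U_n, a_{n,r,t}) = c(U_n, a_{n,r,0}) = Σ_{d | n, d > 1} φ(d)/|r|_d, where φ is Euler's totient function. -/
/-- The cycle number of a map `f` on a subset `s`: the number of equivalence classes of
points of `s` under the equivalence relation generated by `x ↦ f x`, i.e. the number of
orbits (cycles) of `f` meeting `s` when `s` is `f`-invariant. -/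
noncomputable def cycleCount {Ω : Type*} (f : Ω → Ω) (s : Set Ω) : ℕ :=
  Nat.card (Quot fun a b : s => f (a : Ω) = (b : Ω))

/-- `U_n(d)`: the set of elements of order `d` in the cyclic subgroup `⟨u⟩` of `D_{2n}`. -/
def UnD (n d : ℕ) : Set (DihedralGroup n) :=
  {x | (∃ i, x = DihedralGroup.r i) ∧ orderOf x = d}

/-- `U_n`: the set of nonidentity elements of the cyclic subgroup `⟨u⟩` of `D_{2n}`. -/
def Un (n : ℕ) : Set (DihedralGroup n) :=
  {x | (∃ i, x = DihedralGroup.r i) ∧ x ≠ 1}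

/-- `V_n := {u^j v : 0 ≤ j ≤ n-1}`, the set of reflections of `D_{2n}`. -/
def Vn (n : ℕ) : Set (DihedralGroup n) :=
  {x | ∃ j, x = DihedralGroup.sr j}

section Aux

open Relation

lemma cycleCount_t_indep (n : ℕ) (r t : ℤ) (s : Set (DihedralGroup n))
    (hs : ∀ x ∈ s, ∃ i, x = DihedralGroup.r i) :
    cycleCount (dihedralAut n r t) s = cycleCount (dihedralAut n r 0) s := by
  unfold cycleCount
  have h : (fun a b : s => dihedralAut n r t (a : DihedralGroup n) = (b : DihedralGroup n))
      = fun a b : s => dihedralAut n r 0 (a : DihedralGroup n) = (b : DihedralGroup n) := by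
    funext a b
    obtain ⟨i, hi⟩ := hs a a.2
    rw [hi]
    rfl
  rw [h]

lemma eqvGen_pow {G : Type*} [Group G] (g : G) (a : G) (k : ℕ) :
    EqvGen (fun x y : G => g * x = y) a (g ^ k * a) := by
  induction k with
  | zero => simpa using EqvGen.refl a
  | succ k ih =>
      refine EqvGen.trans _ _ _ ih (EqvGen.rel _ _ ?_)
      rw [pow_succ', mul_assoc]

noncomputable def quotMulEquiv {G : Type*} [CommGroup G] [Finite G] (g : G) :
    Quot (fun x y : G => g * x = y) ≃ (G ⧸ Subgroup.zpowers g) where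
  toFun := Quot.lift QuotientGroup.mk (fun a b h => by
    refine (QuotientGroup.eq).mpr ?_
    subst h
    have hab : a⁻¹ * (g * a) = g := by rw [mul_comm g a, inv_mul_cancel_left]
    rw [hab]
    exact Subgroup.mem_zpowers g)
  invFun := fun q => Quotient.liftOn' q (Quot.mk _) (fun a b h => by
    have h' := QuotientGroup.leftRel_apply.mp h
    obtain ⟨k, hk⟩ := ((isOfFinOrder_of_finite g).mem_powers_iff_mem_zpowers).mpr h'
    have hk' : g ^ k = a⁻¹ * b := hk
    have hb : g ^ k * a = b := by rw [hk', mul_comm, mul_inv_cancel_left]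
    exact hb ▸ Quot.eqvGen_sound (eqvGen_pow g a k))
  left_inv := by
    intro q
    induction q using Quot.ind with
    | _ a => rfl
  right_inv := by
    intro q
    induction q using Quotient.inductionOn' with
    | h a => rfl

lemma orderOf_r_eq_addOrderOf {n : ℕ} [NeZero n] (i : ZMod n) :
    orderOf (DihedralGroup.r i) = addOrderOf i := by
  rw [DihedralGroup.orderOf_r, ← ZMod.addOrderOf_coe i.val (NeZero.ne n)]
  congr 1
  exact ZMod.natCast_rightInverse i

lemma addOrderOf_val_eq {n : ℕ} [NeZero n] (i : ZMod n) :
    addOrderOf i = n / Nat.gcd n i.val := by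
  conv_lhs => rw [show i = ((i.val : ℕ) : ZMod n) from (ZMod.natCast_rightInverse i).symm]
  exact ZMod.addOrderOf_coe i.val (NeZero.ne n)

lemma isUnit_intCast_of_gcd {n : ℕ} {r : ℤ} (h : Int.gcd r (n : ℤ) = 1) :
    IsUnit ((r : ZMod n)) := by
  have hc : IsCoprime (r : ℤ) ((n : ℕ) : ℤ) := Int.isCoprime_iff_gcd_eq_one.mpr h
  have h2 := hc.map (Int.castRingHom (ZMod n))
  simp only [eq_intCast, Int.cast_natCast, ZMod.natCast_self] at h2
  exact isCoprime_zero_right.mp h2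

end Aux

lemma cycleCount_UnD_zero (n : ℕ) (hn : 1 < n) (r : ℤ) (hr : Int.gcd r (n : ℤ) = 1)
    (d : ℕ) (hd : 1 < d) (hdvd : d ∣ n) :
    cycleCount (dihedralAut n r 0) (UnD n d) = Nat.totient d / ordMod d r := by
  haveI : NeZero n := ⟨by omega⟩
  haveI : NeZero d := ⟨by omega⟩
  have dpos : 0 < d := by omega
  set m := n / d with hm0
  have hm : m * d = n := Nat.div_mul_cancel hdvd
  have mpos : 0 < m := Nat.div_pos (Nat.le_of_dvd (by omega) hdvd) dpos
  -- gcd r d = 1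
  have hrd : Int.gcd r (d : ℤ) = 1 := by
    have h1 : Int.gcd r (d : ℤ) ∣ Int.gcd r (n : ℤ) := by
      simp only [Int.gcd, Int.natAbs_natCast]
      exact Nat.gcd_dvd_gcd_of_dvd_right _ hdvd
    rw [hr] at h1
    exact Nat.dvd_one.mp h1
  have hud : IsUnit ((r : ZMod d)) := isUnit_intCast_of_gcd hrd
  set gd := hud.unit with hgd
  have hgdspec : (gd : ZMod d) = (r : ZMod d) := hud.unit_spec
  have hord : ordMod d r = orderOf gd := by
    rw [ordMod, ← hgdspec, orderOf_units]
  -- the bijection F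
  set F : (ZMod d)ˣ → ZMod n := fun a => ((m * (a : ZMod d).val : ℕ) : ZMod n) with hF
  have key : ∀ x : ℕ, ((m * (x % d) : ℕ) : ZMod n) = ((m * x : ℕ) : ZMod n) := by
    intro x
    conv_rhs => rw [← Nat.div_add_mod x d]
    have hx : m * (d * (x / d) + x % d) = n * (x / d) + m * (x % d) := by rw [← hm]; ring
    rw [hx]
    push_cast
    simp [ZMod.natCast_self]
  have hvlt : ∀ a : (ZMod d)ˣ, m * (a : ZMod d).val < n := by
    intro a
    calc m * (a : ZMod d).val < m * d := (mul_lt_mul_iff_right₀ mpos).mpr (ZMod.val_lt _)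
      _ = n := hm
  have hFval : ∀ a, (F a).val = m * (a : ZMod d).val := fun a => ZMod.val_cast_of_lt (hvlt a)
  have hFinj : Function.Injective F := by
    intro a b h
    have h2 : m * (a : ZMod d).val = m * (b : ZMod d).val := by
      rw [← hFval a, ← hFval b, h]
    exact Units.ext (ZMod.val_injective d (Nat.eq_of_mul_eq_mul_left mpos h2))
  have hFord : ∀ a, addOrderOf (F a) = d := by
    intro a
    rw [hF]
    rw [ZMod.addOrderOf_coe _ (NeZero.ne n)]
    have hcop : Nat.gcd d (a : ZMod d).val = 1 := (ZMod.val_coe_unit_coprime a).symm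
    rw [← hm, Nat.gcd_mul_left, hcop, mul_one, Nat.mul_div_cancel_left _ mpos]
  have hFsurj : ∀ i : ZMod n, addOrderOf i = d → ∃ a, F a = i := by
    intro i hi
    have h1 : addOrderOf i = n / Nat.gcd n i.val := addOrderOf_val_eq i
    have hgdvd : Nat.gcd n i.val ∣ n := Nat.gcd_dvd_left _ _
    have hdg : n / Nat.gcd n i.val = d := by rw [← h1, hi]
    have hgd2 : d * Nat.gcd n i.val = n := by rw [← hdg]; exact Nat.div_mul_cancel hgdvd
    have hg : Nat.gcd n i.val = m := by
      rw [hm0]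
      exact (Nat.div_eq_of_eq_mul_right dpos hgd2.symm).symm
    have hmdvd : m ∣ i.val := hg ▸ Nat.gcd_dvd_right n i.val
    obtain ⟨j, hj⟩ := hmdvd
    have hjd : Nat.gcd d j = 1 := by
      have h2 : m * Nat.gcd d j = m * 1 := by
        rw [mul_one, ← Nat.gcd_mul_left, hm, ← hj, hg]
      exact Nat.eq_of_mul_eq_mul_left mpos h2
    refine ⟨ZMod.unitOfCoprime j (Nat.coprime_comm.mp hjd), ?_⟩
    show ((m * ((ZMod.unitOfCoprime j (Nat.coprime_comm.mp hjd) : (ZMod d)ˣ) : ZMod d).val : ℕ) : ZMod n) = i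
    rw [ZMod.coe_unitOfCoprime, ZMod.val_natCast, key, ← hj]
    exact ZMod.natCast_rightInverse i
  have hFmul : ∀ a : (ZMod d)ˣ, F (gd * a) = (r : ZMod n) * F a := by
    intro a
    have hval : ((gd * a : (ZMod d)ˣ) : ZMod d).val
        = ((r : ZMod d).val * (a : ZMod d).val) % d := by
      rw [Units.val_mul, hgdspec, ZMod.val_mul]
    show ((m * ((gd * a : (ZMod d)ˣ) : ZMod d).val : ℕ) : ZMod n) = (r : ZMod n) * F a
    rw [hval, key]
    have h1 : (((r : ZMod d).val : ℤ)) ≡ r [ZMOD (d : ℤ)] := by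
      rw [← ZMod.intCast_eq_intCast_iff]
      push_cast
      exact ZMod.natCast_rightInverse _
    have h2 := h1.mul_left' (c := (m : ℤ))
    have h4 : (((m : ℤ) * ((r : ZMod d).val : ℤ) : ℤ) : ZMod n) = (((m : ℤ) * r : ℤ) : ZMod n) := by
      rw [ZMod.intCast_eq_intCast_iff, ← hm]
      exact_mod_cast h2
    have h5 : (m : ZMod n) * (((r : ZMod d).val : ℕ) : ZMod n) = (m : ZMod n) * ((r : ℤ) : ZMod n) := by
      exact_mod_cast h4
    rw [hF]
    push_cast
    linear_combination (((a : ZMod d).val : ZMod n)) * h5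
  -- the equivalence with UnD
  have hmem : ∀ a : (ZMod d)ˣ, DihedralGroup.r (F a) ∈ UnD n d := fun a =>
    ⟨⟨F a, rfl⟩, by rw [orderOf_r_eq_addOrderOf]; exact hFord a⟩
  set Φfun : (ZMod d)ˣ → ↥(UnD n d) := fun a => ⟨DihedralGroup.r (F a), hmem a⟩ with hΦfun
  have hΦbij : Function.Bijective Φfun := by
    constructor
    · intro a b h
      apply hFinj
      have h2 := congrArg Subtype.val h
      simpa [hΦfun] using h2
    · rintro ⟨x, hx⟩
      obtain ⟨i, rfl⟩ := hx.1
      have hio : addOrderOf i = d := by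
        rw [← orderOf_r_eq_addOrderOf]; exact hx.2
      obtain ⟨a, ha⟩ := hFsurj i hio
      exact ⟨a, Subtype.ext (by simp [hΦfun, ha])⟩
  set Φ := Equiv.ofBijective Φfun hΦbij with hΦ
  have hrel : ∀ a b : (ZMod d)ˣ, (gd * a = b) ↔
      (dihedralAut n r 0 ((Φ a : ↥(UnD n d)) : DihedralGroup n) = ((Φ b : ↥(UnD n d)) : DihedralGroup n)) := by
    intro a b
    show (gd * a = b) ↔ (dihedralAut n r 0 (DihedralGroup.r (F a)) = DihedralGroup.r (F b))
    show (gd * a = b) ↔ (DihedralGroup.r ((r : ZMod n) * F a) = DihedralGroup.r (F b))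
    rw [DihedralGroup.r.injEq, ← hFmul]
    exact ⟨fun h => by rw [h], fun h => hFinj h⟩
  have e1 : Quot (fun a b : (ZMod d)ˣ => gd * a = b)
      ≃ Quot (fun a b : ↥(UnD n d) => dihedralAut n r 0 ↑a = ↑b) := Quot.congr Φ hrel
  have e2 := quotMulEquiv gd
  unfold cycleCount
  rw [Nat.card_congr (e1.symm.trans e2)]
  have hcard : Nat.card ((ZMod d)ˣ ⧸ Subgroup.zpowers gd) = Nat.totient d / orderOf gd := by
    have h1 := Subgroup.index_mul_card (Subgroup.zpowers gd)
    rw [Nat.card_zpowers] at h1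
    have hcardG : Nat.card (ZMod d)ˣ = Nat.totient d := by
      rw [Nat.card_eq_fintype_card, ZMod.card_units_eq_totient]
    rw [hcardG] at h1
    rw [← Subgroup.index_eq_card]
    exact (Nat.div_eq_of_eq_mul_left (orderOf_pos gd) h1.symm).symm
  rw [hcard, hord]

lemma cycleCount_Un_zero (n : ℕ) (hn : 1 < n) (r : ℤ) (hr : Int.gcd r (n : ℤ) = 1) :
    cycleCount (dihedralAut n r 0) (Un n)
      = ∑ e ∈ Finset.filter (fun e => 1 < e) (Nat.divisors n), Nat.totient e / ordMod e r := by
  haveI : NeZero n := ⟨by omega⟩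
  classical
  set f := dihedralAut n r 0 with hf
  have hRn : IsUnit ((r : ZMod n)) := isUnit_intCast_of_gcd hr
  have hmulord : ∀ i : ZMod n, addOrderOf ((r : ZMod n) * i) = addOrderOf i := by
    intro i
    exact addOrderOf_injective (AddMonoidHom.mulLeft ((r : ZMod n)))
      hRn.mul_right_injective i
  have hordf : ∀ x : DihedralGroup n, (∃ i, x = DihedralGroup.r i) → orderOf (f x) = orderOf x := by
    rintro _ ⟨i, rfl⟩
    show orderOf (DihedralGroup.r ((r : ZMod n) * i)) = orderOf (DihedralGroup.r i)
    rw [orderOf_r_eq_addOrderOf, orderOf_r_eq_addOrderOf]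
    exact hmulord i
  set D := Finset.filter (fun e => 1 < e) (Nat.divisors n) with hD
  set relU : ↥(Un n) → ↥(Un n) → Prop := fun a b => f ↑a = ↑b with hrelU
  set relD : (e : ℕ) → ↥(UnD n e) → ↥(UnD n e) → Prop := fun e a b => f ↑a = ↑b with hrelD
  have hEq : ∀ x y : ↥(Un n), Relation.EqvGen relU x y →
      orderOf (x : DihedralGroup n) = orderOf (y : DihedralGroup n) := by
    intro x y h
    induction h with
    | rel a b hab => rw [← hab]; exact (hordf ↑a a.2.1).symm
    | refl a => rfl
    | symm a b _ ih => exact ih.symm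
    | trans a b c _ _ ih1 ih2 => exact ih1.trans ih2
  have htrans : ∀ (e : ℕ) (x y : ↥(Un n)), Relation.EqvGen relU x y →
      ∀ (hx : orderOf (x : DihedralGroup n) = e) (hy : orderOf (y : DihedralGroup n) = e),
      Relation.EqvGen (relD e) ⟨↑x, x.2.1, hx⟩ ⟨↑y, y.2.1, hy⟩ := by
    intro e x y h
    induction h with
    | rel a b hab => intro hx hy; exact Relation.EqvGen.rel _ _ hab
    | refl a => intro hx hy; exact Relation.EqvGen.refl _
    | symm a b hab ih => intro hx hy; exact Relation.EqvGen.symm _ _ (ih hy hx)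
    | trans a b c hab hbc ih1 ih2 =>
        intro hx hy
        have hb : orderOf (b : DihedralGroup n) = e := by rw [← hEq a b hab]; exact hx
        exact Relation.EqvGen.trans _ _ _ (ih1 hx hb) (ih2 hb hy)
  have horddvd : ∀ x : ↥(Un n), orderOf (x : DihedralGroup n) ∈ D := by
    rintro ⟨x, hx⟩
    obtain ⟨i, rfl⟩ := hx.1
    have h1 : orderOf (DihedralGroup.r i) ∣ n := by
      rw [orderOf_r_eq_addOrderOf, addOrderOf_val_eq]
      exact Nat.div_dvd_of_dvd (Nat.gcd_dvd_left n i.val)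
    have h2 : orderOf (DihedralGroup.r i) ≠ 1 := by
      intro hc
      exact hx.2 (orderOf_eq_one_iff.mp hc)
    have h3 : orderOf (DihedralGroup.r i) ≠ 0 := by
      intro hc
      rw [hc] at h1
      omega
    simp only [hD, Finset.mem_filter, Nat.mem_divisors]
    exact ⟨⟨h1, by omega⟩, by omega⟩
  set inclD : (e : ↥D) → ↥(UnD n (e : ℕ)) → ↥(Un n) := fun e x => ⟨↑x, x.2.1, fun h1 => by
      have h2 : orderOf (x : DihedralGroup n) = (e : ℕ) := x.2.2
      have he : 1 < (e : ℕ) := (Finset.mem_filter.mp e.2).2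
      rw [h1, orderOf_one] at h2
      omega⟩ with hinclD
  set Ψ : (Σ e : ↥D, Quot (relD (e : ℕ))) → Quot relU := fun p =>
    Quot.map (inclD p.1) (fun a b h => h) p.2 with hΨ
  have hΨbij : Function.Bijective Ψ := by
    constructor
    · rintro ⟨e₁, q₁⟩ ⟨e₂, q₂⟩
      induction q₁ using Quot.ind with | _ a =>
      induction q₂ using Quot.ind with | _ b =>
      intro h
      have hE : Relation.EqvGen relU (inclD e₁ a) (inclD e₂ b) := Quot.eqvGen_exact h
      have he : (e₁ : ℕ) = (e₂ : ℕ) := by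
        calc (e₁ : ℕ) = orderOf ((inclD e₁ a : ↥(Un n)) : DihedralGroup n) := a.2.2.symm
          _ = orderOf ((inclD e₂ b : ↥(Un n)) : DihedralGroup n) := hEq _ _ hE
          _ = (e₂ : ℕ) := b.2.2
      have he' : e₁ = e₂ := Subtype.ext he
      subst he'
      have hq : Quot.mk (relD (e₁ : ℕ)) a = Quot.mk (relD (e₁ : ℕ)) b :=
        Quot.eqvGen_sound (htrans (e₁ : ℕ) (inclD e₁ a) (inclD e₁ b) hE a.2.2 b.2.2)
      rw [hq]
    · intro q
      induction q using Quot.ind with | _ x =>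
      refine ⟨⟨⟨orderOf (x : DihedralGroup n), horddvd x⟩, Quot.mk _ ⟨↑x, x.2.1, rfl⟩⟩, ?_⟩
      show Quot.mk relU _ = Quot.mk relU x
      congr 1
  unfold cycleCount
  rw [← Nat.card_congr (Equiv.ofBijective Ψ hΨbij)]
  haveI : ∀ e : ↥D, Fintype (Quot (relD (e : ℕ))) := fun e => Fintype.ofFinite _
  rw [Nat.card_eq_fintype_card, Fintype.card_sigma]
  simp_rw [← Nat.card_eq_fintype_card]
  rw [Finset.sum_coe_sort D (fun e => Nat.card (Quot (relD e)))]
  refine Finset.sum_congr rfl ?_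
  intro e he
  have h1 := Finset.mem_filter.mp he
  exact cycleCount_UnD_zero n hn r hr e h1.2 (Nat.mem_divisors.mp h1.1).1

/-- Let `n > 1`, let `a_{n,r,t}` be the automorphism of `D_{2n}` determined
by integers `r, t` with `gcd(r,n) = 1`, and let `d > 1` be a divisor of `n`. Then
`c(U_n(d), a_{n,r,t}) = c(U_n(d), a_{n,r,0}) = φ(d)/|r|_d`, and consequently
`c(U_n, a_{n,r,t}) = c(U_n, a_{n,r,0}) = Σ_{d ∣ n, d > 1} φ(d)/|r|_d`. -/
theorem cycleCount_UnD_and_Un (n : ℕ) (hn : 1 < n) (r t : ℤ) (hr : Int.gcd r (n : ℤ) = 1)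
    (d : ℕ) (hd : 1 < d) (hdvd : d ∣ n) :
    (cycleCount (dihedralAut n r t) (UnD n d) = cycleCount (dihedralAut n r 0) (UnD n d) ∧
      cycleCount (dihedralAut n r t) (UnD n d) = Nat.totient d / ordMod d r) ∧
    (cycleCount (dihedralAut n r t) (Un n) = cycleCount (dihedralAut n r 0) (Un n) ∧
      cycleCount (dihedralAut n r t) (Un n)
        = ∑ e ∈ Finset.filter (fun e => 1 < e) (Nat.divisors n), Nat.totient e / ordMod e r) := by
  have hsUnD : ∀ x ∈ UnD n d, ∃ i, x = DihedralGroup.r i := fun x hx => hx.1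
  have hsUn : ∀ x ∈ Un n, ∃ i, x = DihedralGroup.r i := fun x hx => hx.1
  have h1 := cycleCount_t_indep n r t (UnD n d) hsUnD
  have h2 := cycleCount_t_indep n r t (Un n) hsUn
  refine ⟨⟨h1, ?_⟩, h2, ?_⟩
  · rw [h1]; exact cycleCount_UnD_zero n hn r hr d hd hdvd
  · rw [h2]; exact cycleCount_Un_zero n hn r hr
end

section
/- Let n > 1 be an integer and let a_{n,r,t} and a_{n,r,t'} be automorphisms of D_{2n} determined by integers r, t and r, t' with gcd(r, n) = 1. If gcd(t, n) = gcd(t', n), then c(V_n, a_{n,r,t}) = c(V_n, a_{n,r,t'}). -/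
/- ### Auxiliary material -/

private lemma isUnit_intCast_of_gcd_eq_one {m : ℕ} {a : ℤ} (h : Int.gcd a m = 1) :
    IsUnit ((a : ZMod m)) := by
  have h1 : IsUnit ((a.natAbs : ZMod m)) := by
    rw [ZMod.isUnit_iff_coprime]; exact h
  rcases Int.natAbs_eq a with he | he
  · rw [he, Int.cast_natCast]; exact h1
  · rw [he, Int.cast_neg, Int.cast_natCast]; exact h1.neg

/-- If `gcd(t,n) = gcd(t',n)` then `t' = c·t` in `ZMod n` for some unit `c`. -/
private lemma exists_unit_mul_eq (n : ℕ) (hn : 1 < n) (t t' : ℤ)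
    (h : Int.gcd t (n : ℤ) = Int.gcd t' (n : ℤ)) :
    ∃ c : (ZMod n)ˣ, (c : ZMod n) * (t : ZMod n) = (t' : ZMod n) := by
  haveI : NeZero n := ⟨by omega⟩
  set d : ℕ := Int.gcd t n with hd
  have hd0 : 0 < d := by
    have : (n : ℤ) ≠ 0 := by exact_mod_cast (by omega : n ≠ 0)
    exact Int.gcd_pos_of_ne_zero_right _ this
  have hd0' : 0 < Int.gcd t' n := by rw [← h]; exact hd0
  have hdvd : d ∣ n := by
    have : (d : ℤ) ∣ (n : ℤ) := Int.gcd_dvd_right _ _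
    exact_mod_cast this
  set m : ℕ := n / d with hm
  have hmd : n = d * m := (Nat.mul_div_cancel' hdvd).symm
  have hnm : (n : ℤ) / d = m := by
    rw [hmd]; push_cast; rw [Int.mul_ediv_cancel_left _ (by exact_mod_cast hd0.ne')]
  set a : ℤ := t / d with ha
  set a' : ℤ := t' / d with ha'
  have hta : t = d * a := (Int.mul_ediv_cancel' (Int.gcd_dvd_left _ _)).symm
  have hta' : t' = d * a' := by
    have hdt' : (d : ℤ) ∣ t' := by rw [h]; exact Int.gcd_dvd_left _ _
    exact (Int.mul_ediv_cancel' hdt').symm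
  have ham : Int.gcd a m = 1 := by
    have h1 := Int.gcd_div_gcd_div_gcd (i := t) (j := n) (by exact_mod_cast hd0)
    rwa [hnm] at h1
  have ham' : Int.gcd a' m = 1 := by
    have h1 := Int.gcd_div_gcd_div_gcd (i := t') (j := n) (by exact_mod_cast hd0')
    rw [← h] at h1
    rwa [hnm] at h1
  obtain ⟨ua, hua⟩ := isUnit_intCast_of_gcd_eq_one (m := m) ham
  obtain ⟨ua', hua'⟩ := isUnit_intCast_of_gcd_eq_one (m := m) ham'
  have hmdvd : m ∣ n := Dvd.intro_left d hmd.symm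
  obtain ⟨c, hc⟩ := ZMod.unitsMap_surjective hmdvd (ua' * ua⁻¹)
  refine ⟨c, ?_⟩
  have hkey : ((ZMod.castHom hmdvd (ZMod m)) (c : ZMod n)) * (a : ZMod m) = (a' : ZMod m) := by
    have h2 : ((ZMod.castHom hmdvd (ZMod m)) (c : ZMod n))
        = ((ua' * ua⁻¹ : (ZMod m)ˣ) : ZMod m) := by rw [← hc]; rfl
    have h3 : ((ua⁻¹ : (ZMod m)ˣ) : ZMod m) * (a : ZMod m) = 1 := by
      rw [← hua]; exact Units.inv_mul _
    rw [h2, Units.val_mul, mul_assoc, h3, mul_one, hua']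
  set k : ℕ := (c : ZMod n).val with hk
  have hkn : ((k : ℤ) : ZMod n) = (c : ZMod n) := by
    push_cast; rw [ZMod.natCast_val, ZMod.cast_id]
  have hkm : ((k : ℤ) : ZMod m) = (ZMod.castHom hmdvd (ZMod m)) (c : ZMod n) := by
    push_cast; exact (ZMod.natCast_val _).trans (ZMod.castHom_apply _).symm
  have hmod : ((k * a : ℤ) : ZMod m) = ((a' : ℤ) : ZMod m) := by
    rw [Int.cast_mul, hkm, hkey]
  have hdvdm : (m : ℤ) ∣ ((k : ℤ) * a - a') := by
    have h4 := (ZMod.intCast_eq_intCast_iff _ _ _).mp hmod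
    exact Int.ModEq.dvd h4.symm
  have hdvdn : (n : ℤ) ∣ ((k : ℤ) * t - t') := by
    rw [hta, hta']
    have h5 : (k : ℤ) * ((d : ℤ) * a) - (d : ℤ) * a' = (d : ℤ) * ((k : ℤ) * a - a') := by ring
    rw [h5, hmd]; push_cast
    exact mul_dvd_mul_left _ hdvdm
  have h0 := (ZMod.intCast_zmod_eq_zero_iff_dvd _ n).mpr hdvdn
  rw [Int.cast_sub, Int.cast_mul, sub_eq_zero] at h0
  rw [← hkn]; exact h0

private def reflIdx {n : ℕ} : DihedralGroup n → ZMod n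
  | .r _ => 0
  | .sr j => j

/-- `V_n` is in bijection with `ZMod n` via `sr j ↦ j`. -/
private def vnEquiv (n : ℕ) : (Vn n) ≃ ZMod n where
  toFun x := reflIdx x.1
  invFun j := ⟨.sr j, j, rfl⟩
  left_inv := by rintro ⟨x, j, rfl⟩; rfl
  right_inv j := rfl

private def mulUnitEquiv {n : ℕ} (c : (ZMod n)ˣ) : ZMod n ≃ ZMod n where
  toFun x := c * x
  invFun x := (c⁻¹ : (ZMod n)ˣ) * x
  left_inv x := by simp
  right_inv x := by simp

/-- Transfer the cycle count on `V_n` to a cycle count on `ZMod n`. -/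
private lemma cycleCount_Vn_eq (n : ℕ) (r t : ℤ) :
    cycleCount (dihedralAut n r t) (Vn n)
      = Nat.card (Quot fun a b : ZMod n => (r : ZMod n) * a - (t : ZMod n) = b) := by
  apply Nat.card_congr
  refine Quot.congr (vnEquiv n) ?_
  rintro ⟨_, j, rfl⟩ ⟨_, j', rfl⟩
  simp [dihedralAut, vnEquiv, reflIdx]

/-- Let `n > 1` and let `a_{n,r,t}` and `a_{n,r,t'}` be automorphisms of
`D_{2n}` determined by integers `r, t` and `r, t'` with `gcd(r,n) = 1`. If
`gcd(t,n) = gcd(t',n)`, then `c(V_n, a_{n,r,t}) = c(V_n, a_{n,r,t'})`. -/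
theorem cycleCount_Vn_eq_of_gcd_eq (n : ℕ) (hn : 1 < n) (r t t' : ℤ)
    (hr : Int.gcd r (n : ℤ) = 1) (h : Int.gcd t (n : ℤ) = Int.gcd t' (n : ℤ)) :
    cycleCount (dihedralAut n r t) (Vn n) = cycleCount (dihedralAut n r t') (Vn n) := by
  obtain ⟨c, hc⟩ := exists_unit_mul_eq n hn t t' h
  rw [cycleCount_Vn_eq, cycleCount_Vn_eq]
  apply Nat.card_congr
  refine Quot.congr (mulUnitEquiv c) ?_
  intro a b
  dsimp [mulUnitEquiv]
  have key : (r : ZMod n) * ((c : ZMod n) * a) - (t' : ZMod n)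
      = (c : ZMod n) * ((r : ZMod n) * a - (t : ZMod n)) := by rw [← hc]; ring
  rw [key, Units.mul_right_inj]
end

section
/- Let n > 1 be a square-free integer, let a_{n,r,t'} be the automorphism of D_{2n} determined by integers r, t' with gcd(r, n) = 1, and set t := gcd(t', n). Then c(D_{2n}^#, a_{n,r,t'}) = c(U_n, a_{n,r,0}) + c(V_n, a_{n,r,t}), where D_{2n}^# denotes the set of nonidentity elements of D_{2n}. -/
/-- A relation on a sum type relating only same-side elements. -/
def sumRel {α β : Type*} (ra : α → α → Prop) (rb : β → β → Prop) :
    α ⊕ β → α ⊕ β → Prop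
  | Sum.inl a, Sum.inl b => ra a b
  | Sum.inr a, Sum.inr b => rb a b
  | _, _ => False

/-- The quotient of a sum by a same-side relation is the sum of the quotients. -/
def quotSumEquiv {α β : Type*} (ra : α → α → Prop) (rb : β → β → Prop) :
    Quot (sumRel ra rb) ≃ Quot ra ⊕ Quot rb where
  toFun := Quot.lift
    (Sum.elim (fun a => Sum.inl (Quot.mk ra a)) (fun b => Sum.inr (Quot.mk rb b)))
    (by
      rintro (a | a) (b | b) h
      · exact congrArg Sum.inl (Quot.sound h)
      · exact absurd h not_false
      · exact absurd h not_false
      · exact congrArg Sum.inr (Quot.sound h))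
  invFun := Sum.elim
    (Quot.lift (fun a => Quot.mk _ (Sum.inl a)) (fun a b h => Quot.sound h))
    (Quot.lift (fun b => Quot.mk _ (Sum.inr b)) (fun a b h => Quot.sound h))
  left_inv := by
    intro q
    induction q using Quot.ind with
    | _ x => rcases x with a | a <;> rfl
  right_inv := by
    rintro (q | q) <;> induction q using Quot.ind <;> rfl

/-- The nonidentity elements of `D_{2n}` split as `U_n ⊕ V_n`. -/
def nonidSplit (n : ℕ) : ({x : DihedralGroup n | x ≠ 1} : Set _) ≃ ↥(Un n) ⊕ ↥(Vn n) where
  toFun x := match x with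
    | ⟨DihedralGroup.r i, h⟩ => Sum.inl ⟨DihedralGroup.r i, ⟨i, rfl⟩, h⟩
    | ⟨DihedralGroup.sr j, _⟩ => Sum.inr ⟨DihedralGroup.sr j, ⟨j, rfl⟩⟩
  invFun x := match x with
    | Sum.inl ⟨x, hx⟩ => ⟨x, hx.2⟩
    | Sum.inr ⟨x, hx⟩ => ⟨x, by obtain ⟨j, rfl⟩ := hx; simp [DihedralGroup.one_def, -DihedralGroup.r_zero]⟩
  left_inv := by rintro ⟨(x | x), h⟩ <;> rfl
  right_inv := by
    rintro (⟨x, hx⟩ | ⟨x, hx⟩)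
    · obtain ⟨⟨i, rfl⟩, h⟩ := hx; rfl
    · obtain ⟨j, rfl⟩ := hx; rfl

/-- Multiplication by a unit `w` of `ZMod n` as a permutation of the reflections. -/
def vPerm (n : ℕ) (w : (ZMod n)ˣ) : ↥(Vn n) ≃ ↥(Vn n) where
  toFun x := match x with
    | ⟨DihedralGroup.r i, hx⟩ => ⟨DihedralGroup.r i, hx⟩
    | ⟨DihedralGroup.sr j, _⟩ => ⟨DihedralGroup.sr ((w : ZMod n) * j), ⟨_, rfl⟩⟩
  invFun x := match x with
    | ⟨DihedralGroup.r i, hx⟩ => ⟨DihedralGroup.r i, hx⟩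
    | ⟨DihedralGroup.sr j, _⟩ => ⟨DihedralGroup.sr (((w⁻¹ : (ZMod n)ˣ) : ZMod n) * j), ⟨_, rfl⟩⟩
  left_inv := by
    rintro ⟨(i | j), hx⟩
    · rfl
    · exact Subtype.ext (by simp)
  right_inv := by
    rintro ⟨(i | j), hx⟩
    · rfl
    · exact Subtype.ext (by simp)

/-- For `n` squarefree there is a unit `w` of `ZMod n` with `w · t' = gcd(t', n)`. -/
lemma exists_unit_mul_gcd (n : ℕ) (hn : 0 < n) (hsf : Squarefree n) (t' : ℤ) :
    ∃ w : (ZMod n)ˣ, (w : ZMod n) * (t' : ZMod n) = (((Int.gcd t' (n : ℤ) : ℕ) : ℤ) : ZMod n) := by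
  set g : ℕ := Int.gcd t' (n : ℤ) with hg
  have hgpos : 0 < g := Int.gcd_pos_iff.mpr (Or.inr (by exact_mod_cast hn.ne'))
  have hgdvdn : g ∣ n := Int.ofNat_dvd.mp (Int.gcd_dvd_right _ _)
  set N : ℕ := n / g with hN
  have hgN : g * N = n := Nat.mul_div_cancel' hgdvdn
  have hcop : IsCoprime (g : ℤ) (N : ℤ) := by
    rw [Nat.isCoprime_iff_coprime]
    have h2 : Nat.gcd g N * Nat.gcd g N ∣ n := by
      rw [← hgN]; exact mul_dvd_mul (Nat.gcd_dvd_left _ _) (Nat.gcd_dvd_right _ _)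
    simpa [Nat.isUnit_iff] using hsf _ h2
  obtain ⟨c1, c2, hc⟩ := hcop
  have hgt' : (g : ℤ) ∣ t' := Int.gcd_dvd_left _ _
  set m : ℤ := t' / (g : ℤ) with hm
  have hmg : (g : ℤ) * m = t' := Int.mul_ediv_cancel' hgt'
  have hmN : IsCoprime m (N : ℤ) := by
    rw [Int.isCoprime_iff_gcd_eq_one]
    have h3 := Int.gcd_div_gcd_div_gcd (i := t') (j := (n : ℤ)) (by exact_mod_cast hgpos)
    rw [hm, hN, Int.natCast_div, hg]
    exact h3
  obtain ⟨a, b, hab⟩ := hmN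
  set w : ℤ := a + (1 - a) * c2 * N with hwdef
  have hdvd : (n : ℤ) ∣ w * t' - (g : ℤ) := by
    refine ⟨(1 - a) * c2 * m - b, ?_⟩
    have hn' : (n : ℤ) = (g : ℤ) * (N : ℤ) := by exact_mod_cast hgN.symm
    rw [hn', ← hmg, hwdef]
    linear_combination ((g : ℤ)) * hab
  have hcw : IsCoprime w (n : ℤ) := by
    have h1 : IsCoprime w (g : ℤ) :=
      ⟨1, (1 - a) * c1, by rw [hwdef]; linear_combination (1 - a) * hc⟩
    have h2 : IsCoprime w (N : ℤ) :=
      ⟨m, b - m * (1 - a) * c2, by rw [hwdef]; linear_combination hab⟩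
    have hn' : (n : ℤ) = (g : ℤ) * (N : ℤ) := by exact_mod_cast hgN.symm
    rw [hn']
    exact h1.mul_right h2
  obtain ⟨u, v, huv⟩ := hcw
  have h1 : ((w : ZMod n)) * ((u : ℤ) : ZMod n) = 1 := by
    have := congrArg (fun z : ℤ => (z : ZMod n)) huv
    push_cast at this
    rw [ZMod.natCast_self] at this
    linear_combination this
  refine ⟨Units.mk ((w : ℤ) : ZMod n) ((u : ℤ) : ZMod n) h1 (by rw [mul_comm]; exact h1), ?_⟩
  have h0 : ((w * t' - (g : ℤ) : ℤ) : ZMod n) = 0 := by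
    rw [ZMod.intCast_zmod_eq_zero_iff_dvd]; exact hdvd
  push_cast at h0
  show ((w : ℤ) : ZMod n) * _ = _
  push_cast
  linear_combination h0

/-- Let `n > 1` be square-free, let `a_{n,r,t'}` be the automorphism of
`D_{2n}` determined by integers `r, t'` with `gcd(r,n) = 1`, and set `t := gcd(t',n)`. Then
`c(D_{2n}^#, a_{n,r,t'}) = c(U_n, a_{n,r,0}) + c(V_n, a_{n,r,t})`, where `D_{2n}^#` is the
set of nonidentity elements of `D_{2n}`. -/
theorem cycleCount_nonidentity_split (n : ℕ) (hn : 1 < n) (hsf : Squarefree n) (r t' : ℤ)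
    (hr : Int.gcd r (n : ℤ) = 1) :
    cycleCount (dihedralAut n r t') {x : DihedralGroup n | x ≠ 1}
      = cycleCount (dihedralAut n r 0) (Un n)
        + cycleCount (dihedralAut n r ((Int.gcd t' (n : ℤ) : ℕ) : ℤ)) (Vn n) := by
  haveI : NeZero n := ⟨by omega⟩
  obtain ⟨w, hw⟩ := exists_unit_mul_gcd n (by omega) hsf t'
  unfold cycleCount
  set t : ℤ := ((Int.gcd t' (n : ℤ) : ℕ) : ℤ) with ht
  have e1 : (Quot fun a b : ({x : DihedralGroup n | x ≠ 1} : Set _) => dihedralAut n r t' ↑a = ↑b)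
      ≃ (Quot fun a b : ↥(Un n) => dihedralAut n r 0 ↑a = ↑b)
        ⊕ (Quot fun a b : ↥(Vn n) => dihedralAut n r t' ↑a = ↑b) := by
    refine (Quot.congr (nonidSplit n) ?_).trans (quotSumEquiv _ _)
    rintro ⟨(i | i), ha⟩ ⟨(j | j), hb⟩ <;>
      simp [nonidSplit, sumRel, dihedralAut]
  have e2 : (Quot fun a b : ↥(Vn n) => dihedralAut n r t' ↑a = ↑b)
      ≃ (Quot fun a b : ↥(Vn n) => dihedralAut n r t ↑a = ↑b) := by
    refine Quot.congr (vPerm n w) ?_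
    rintro ⟨x, hx⟩ ⟨y, hy⟩
    obtain ⟨j, rfl⟩ := hx
    obtain ⟨k, rfl⟩ := hy
    show (DihedralGroup.sr ((r : ZMod n) * j - (t' : ZMod n)) = DihedralGroup.sr k)
      ↔ (DihedralGroup.sr ((r : ZMod n) * ((w : ZMod n) * j) - (t : ZMod n))
          = DihedralGroup.sr ((w : ZMod n) * k))
    simp only [DihedralGroup.sr.injEq]
    constructor
    · rintro rfl
      rw [← hw]
      ring
    · intro h
      have h2 : (w : ZMod n) * ((r : ZMod n) * j - (t' : ZMod n)) = (w : ZMod n) * k := by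
        linear_combination h - hw
      exact (Units.mul_right_inj w).mp h2
  rw [Nat.card_congr (e1.trans (Equiv.sumCongr (Equiv.refl _) e2)), Nat.card_sum]
end

section
/- Let p > 3 be a prime and let r be an integer with 1 ≤ r ≤ 3p − 1 and gcd(r, 3p) = 1. Then c(U_{3p}, a_{3p,r,0}) equals: 2 + 3(p−1)/|r|_p if r ≡ 1 (mod 3); 1 + 2(p−1)/|r|_p if r ≡ 2 (mod 3) and |r|_p is odd; and 1 + 3(p−1)/|r|_p if r ≡ 2 (mod 3) and |r|_p is even. -/
section AuxCycleCount

open Subgroup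


lemma quot_card_congr {α β : Type*} (e : α ≃ β) (ra : α → α → Prop) (rb : β → β → Prop)
    (h : ∀ a a', ra a a' ↔ rb (e a) (e a')) :
    Nat.card (Quot ra) = Nat.card (Quot rb) :=
  Nat.card_congr (Quot.congr e h)

lemma mk_mul_pow {G : Type*} [CommGroup G] (g a : G) (k : ℕ) :
    Quot.mk (fun a b : G => g * a = b) a = Quot.mk _ (g ^ k * a) := by
  induction k with
  | zero => simp
  | succ n ih =>
    rw [ih]
    exact Quot.sound (by rw [pow_succ, mul_comm (g ^ n) g, mul_assoc])

lemma mk_mul_zpow {G : Type*} [CommGroup G] (g a : G) (k : ℤ) :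
    Quot.mk (fun a b : G => g * a = b) a = Quot.mk _ (g ^ k * a) := by
  cases k with
  | ofNat n => rw [Int.ofNat_eq_natCast, zpow_natCast]; exact mk_mul_pow g a n
  | negSucc n =>
    have h1 : g ^ ((n : ℤ) + 1) * (g ^ (Int.negSucc n) * a) = a := by
      rw [← mul_assoc, ← zpow_add, show ((n : ℤ) + 1) + (Int.negSucc n) = 0 by
        simp [Int.negSucc_eq], zpow_zero, one_mul]
    have := mk_mul_pow g (g ^ (Int.negSucc n) * a) (n + 1)
    rw [← zpow_natCast g (n + 1)] at this
    push_cast at this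
    rw [h1] at this
    exact this.symm

lemma card_quot_group {G : Type*} [CommGroup G] [Finite G] (g : G) :
    Nat.card (Quot fun a b : G => g * a = b) = Nat.card G / orderOf g := by
  have hsound : ∀ a b : G, g * a = b → (QuotientGroup.mk a : G ⧸ zpowers g) = QuotientGroup.mk b := by
    intro a b hab
    rw [QuotientGroup.eq]
    subst hab
    rw [mul_comm g a, inv_mul_cancel_left]
    exact Subgroup.mem_zpowers g
  have key : Nat.card (Quot fun a b : G => g * a = b) = Nat.card (G ⧸ zpowers g) := by
    apply Nat.card_eq_of_bijective (Quot.lift (fun a => (QuotientGroup.mk a : G ⧸ zpowers g)) hsound)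
    constructor
    · intro x y
      induction x using Quot.ind with | _ a => ?_
      induction y using Quot.ind with | _ b => ?_
      intro hxy
      change (QuotientGroup.mk a : G ⧸ zpowers g) = QuotientGroup.mk b at hxy
      rw [QuotientGroup.eq] at hxy
      obtain ⟨k, hk⟩ := hxy
      have hk' : g ^ k = a⁻¹ * b := hk
      have hb : b = g ^ k * a := by
        rw [hk', mul_comm (a⁻¹) b, mul_assoc, inv_mul_cancel, mul_one]
      rw [hb]
      exact mk_mul_zpow g a k
    · intro y
      obtain ⟨a, rfl⟩ := QuotientGroup.mk_surjective y
      exact ⟨Quot.mk _ a, rfl⟩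
  rw [key, ← Subgroup.index_eq_card, ← Nat.card_zpowers g]
  have h := Subgroup.card_mul_index (zpowers g)
  have hpos : 0 < Nat.card (zpowers g) := Nat.card_pos
  exact (Nat.div_eq_of_eq_mul_left hpos (by rw [← h]; ring)).symm

lemma card_quot_split {α : Type*} [Finite α] (rel : α → α → Prop) (P : α → Prop)
    (h : ∀ a b, rel a b → (P a ↔ P b)) :
    Nat.card (Quot rel) =
      Nat.card (Quot fun a b : {x // P x} => rel a b) +
      Nat.card (Quot fun a b : {x // ¬ P x} => rel a b) := by
  classical
  rw [← Nat.card_sum]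
  refine Nat.card_congr ⟨Quot.lift (fun a => if ha : P a then Sum.inl (Quot.mk (fun a b : {x // P x} => rel a b) ⟨a, ha⟩) else Sum.inr (Quot.mk (fun a b : {x // ¬ P x} => rel a b) ⟨a, ha⟩)) ?_,
    Sum.elim (Quot.lift (fun a => Quot.mk rel a.1) fun a b hab => Quot.sound hab)
      (Quot.lift (fun a => Quot.mk rel a.1) fun a b hab => Quot.sound hab), ?_, ?_⟩
  · intro a b hab
    by_cases ha : P a
    · have hb := (h a b hab).mp ha
      simp only [dif_pos ha, dif_pos hb]
      exact congrArg _ (Quot.sound hab)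
    · have hb := fun hb => ha ((h a b hab).mpr hb)
      simp only [dif_neg ha, dif_neg hb]
      exact congrArg _ (Quot.sound hab)
  · intro x
    induction x using Quot.ind with | _ a => ?_
    by_cases ha : P a
    · simp [dif_pos ha]
    · simp [dif_neg ha]
  · intro x
    cases x with
    | inl q =>
      induction q using Quot.ind with | _ a => ?_
      simp [dif_pos a.2]
    | inr q =>
      induction q using Quot.ind with | _ a => ?_
      simp [dif_neg a.2]

lemma main_count (p : ℕ) (hp : p.Prime) (hp3 : 3 < p) (r : ℤ)
    (h3 : (r : ZMod 3) ≠ 0) (hpr : (r : ZMod p) ≠ 0) :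
    cycleCount (dihedralAut (3 * p) r 0) (Un (3 * p)) =
      2 / ordMod 3 r + (p - 1) / ordMod p r
        + 2 * (p - 1) / Nat.lcm (ordMod 3 r) (ordMod p r) := by
  haveI : Fact p.Prime := ⟨hp⟩
  haveI : Fact (Nat.Prime 3) := ⟨by norm_num⟩
  haveI : NeZero (3 * p) := ⟨by positivity⟩
  classical
  set n := 3 * p with hn
  -- Step 1 : transfer to nonzero elements of ZMod n
  have hφ : Function.Bijective
      (fun i : {x : ZMod n // x ≠ 0} =>
        (⟨DihedralGroup.r i.1, ⟨i.1, rfl⟩, by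
          rw [DihedralGroup.one_def]
          exact fun h => i.2 (DihedralGroup.r.inj h)⟩ : ↥(Un n))) := by
    constructor
    · intro a b hab
      apply Subtype.ext
      have := congrArg Subtype.val hab
      simpa using this
    · rintro ⟨x, ⟨i, rfl⟩, hne⟩
      refine ⟨⟨i, fun h0 => hne ?_⟩, rfl⟩
      rw [h0, DihedralGroup.one_def]
  have step1 : cycleCount (dihedralAut n r 0) (Un n) =
      Nat.card (Quot fun a b : {x : ZMod n // x ≠ 0} => (r : ZMod n) * ↑a = ↑b) := by
    unfold cycleCount
    refine (quot_card_congr (Equiv.ofBijective _ hφ) _ _ ?_).symm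
    intro a a'
    simp [dihedralAut, Equiv.ofBijective]
  rw [step1]
  -- Step 2 : CRT
  have hcop : Nat.Coprime 3 p := (Nat.coprime_primes (by norm_num) hp).mpr (by omega)
  set σ := ZMod.chineseRemainder hcop with hσ
  set g3 : ZMod 3 := (r : ZMod 3) with hg3
  set gp : ZMod p := (r : ZMod p) with hgp
  have hσr : σ ((r : ℤ) : ZMod n) = (g3, gp) := by
    rw [map_intCast]
    rfl
  have step2 : Nat.card (Quot fun a b : {x : ZMod n // x ≠ 0} => (r : ZMod n) * ↑a = ↑b)
      = Nat.card (Quot fun a b : {y : ZMod 3 × ZMod p // y ≠ 0} => (g3, gp) * ↑a = ↑b) := by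
    refine quot_card_congr (σ.toEquiv.subtypeEquiv (fun x => by
      simp [map_eq_zero_iff _ σ.injective])) _ _ ?_
    intro a a'
    simp only [Equiv.subtypeEquiv_apply, RingEquiv.toEquiv_eq_coe, EquivLike.coe_coe]
    constructor
    · intro h; rw [← h, map_mul, hσr]
    · intro h
      apply σ.injective
      rw [map_mul, hσr, h]
  rw [step2]
  set u3 : (ZMod 3)ˣ := Units.mk0 g3 h3 with hu3
  set up : (ZMod p)ˣ := Units.mk0 gp hpr with hup
  have hord3 : ordMod 3 r = orderOf u3 := by
    rw [ordMod, ← orderOf_units, Units.val_mk0]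
  have hordp : ordMod p r = orderOf up := by
    rw [ordMod, ← orderOf_units, Units.val_mk0]
  -- first split: second coordinate zero or not
  have hinv1 : ∀ a b : {y : ZMod 3 × ZMod p // y ≠ 0}, ((g3, gp) * (a : ZMod 3 × ZMod p) = b) →
      (((a : ZMod 3 × ZMod p).2 = 0) ↔ ((b : ZMod 3 × ZMod p).2 = 0)) := by
    intro a b hab
    rw [← hab]
    simp [hpr]
  rw [card_quot_split _ (fun x : {y : ZMod 3 × ZMod p // y ≠ 0} => (x : ZMod 3 × ZMod p).2 = 0)
    hinv1]
  -- part A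
  have hχA : Function.Bijective (fun u : (ZMod 3)ˣ =>
      (⟨⟨((u : ZMod 3), 0), by simp [Prod.ext_iff]⟩, rfl⟩ :
        {x : {y : ZMod 3 × ZMod p // y ≠ 0} // (x : ZMod 3 × ZMod p).2 = 0})) := by
    constructor
    · intro a b hab
      simp only [Subtype.mk.injEq, Prod.mk.injEq] at hab
      exact Units.ext hab.1
    · rintro ⟨⟨⟨a, b⟩, hne⟩, hb⟩
      simp only at hb
      subst hb
      have ha : a ≠ 0 := fun h => hne (by simp [h, Prod.ext_iff])
      exact ⟨Units.mk0 a ha, by simp⟩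
  have hA := quot_card_congr (Equiv.ofBijective _ hχA)
    (fun a b : (ZMod 3)ˣ => u3 * a = b)
    (fun a b : {x : {y : ZMod 3 × ZMod p // y ≠ 0} // (x : ZMod 3 × ZMod p).2 = 0} =>
      (g3, gp) * ((a : {y : ZMod 3 × ZMod p // y ≠ 0}) : ZMod 3 × ZMod p) = ↑↑b) (by
      intro a a'
      simp [Equiv.ofBijective, Units.ext_iff, Prod.ext_iff, hu3])
  rw [card_quot_group u3] at hA
  rw [← hA]
  -- transfer the rest to a clean subtype
  have hψ : Function.Bijective (fun y : {y : ZMod 3 × ZMod p // (y : ZMod 3 × ZMod p).2 ≠ 0} =>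
      (⟨⟨y.1, fun h => y.2 (by rw [h]; rfl)⟩, y.2⟩ :
        {x : {y : ZMod 3 × ZMod p // y ≠ 0} // ¬ (x : ZMod 3 × ZMod p).2 = 0})) := by
    constructor
    · intro a b hab
      simp only [Subtype.mk.injEq] at hab
      exact Subtype.ext hab
    · rintro ⟨⟨y, hne⟩, hy2⟩
      exact ⟨⟨y, hy2⟩, rfl⟩
  have hrest := quot_card_congr (Equiv.ofBijective _ hψ)
    (fun a b : {y : ZMod 3 × ZMod p // (y : ZMod 3 × ZMod p).2 ≠ 0} =>
      (g3, gp) * (a : ZMod 3 × ZMod p) = b)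
    (fun a b : {x : {y : ZMod 3 × ZMod p // y ≠ 0} // ¬ (x : ZMod 3 × ZMod p).2 = 0} =>
      (g3, gp) * ((a : {y : ZMod 3 × ZMod p // y ≠ 0}) : ZMod 3 × ZMod p) = ↑↑b) (by
      intro a a'
      simp [Equiv.ofBijective])
  rw [← hrest]
  -- second split: first coordinate zero or not
  have hinv2 : ∀ a b : {y : ZMod 3 × ZMod p // (y : ZMod 3 × ZMod p).2 ≠ 0},
      ((g3, gp) * (a : ZMod 3 × ZMod p) = b) →
      (((a : ZMod 3 × ZMod p).1 = 0) ↔ ((b : ZMod 3 × ZMod p).1 = 0)) := by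
    intro a b hab
    rw [← hab]
    simp [h3]
  rw [card_quot_split _
    (fun x : {y : ZMod 3 × ZMod p // (y : ZMod 3 × ZMod p).2 ≠ 0} =>
      (x : ZMod 3 × ZMod p).1 = 0) hinv2]
  -- part B
  have hχB : Function.Bijective (fun u : (ZMod p)ˣ =>
      (⟨⟨(0, (u : ZMod p)), by simp⟩, rfl⟩ :
        {x : {y : ZMod 3 × ZMod p // (y : ZMod 3 × ZMod p).2 ≠ 0} //
          (x : ZMod 3 × ZMod p).1 = 0})) := by
    constructor
    · intro a b hab
      simp only [Subtype.mk.injEq, Prod.mk.injEq] at hab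
      exact Units.ext hab.2
    · rintro ⟨⟨⟨a, b⟩, hne⟩, ha⟩
      simp only at ha hne
      subst ha
      exact ⟨Units.mk0 b hne, by simp⟩
  have hB := quot_card_congr (Equiv.ofBijective _ hχB)
    (fun a b : (ZMod p)ˣ => up * a = b)
    (fun a b : {x : {y : ZMod 3 × ZMod p // (y : ZMod 3 × ZMod p).2 ≠ 0} //
        (x : ZMod 3 × ZMod p).1 = 0} =>
      (g3, gp) * ((a : {y : ZMod 3 × ZMod p // (y : ZMod 3 × ZMod p).2 ≠ 0}) : ZMod 3 × ZMod p)
        = ↑↑b) (by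
      intro a a'
      simp [Equiv.ofBijective, Units.ext_iff, Prod.ext_iff, hup])
  rw [card_quot_group up] at hB
  rw [← hB]
  -- part C
  have hχC : Function.Bijective (fun u : (ZMod 3)ˣ × (ZMod p)ˣ =>
      (⟨⟨((u.1 : ZMod 3), (u.2 : ZMod p)), by simp⟩, by simp⟩ :
        {x : {y : ZMod 3 × ZMod p // (y : ZMod 3 × ZMod p).2 ≠ 0} //
          ¬ (x : ZMod 3 × ZMod p).1 = 0})) := by
    constructor
    · intro a b hab
      simp only [Subtype.mk.injEq, Prod.mk.injEq] at hab
      exact Prod.ext (Units.ext hab.1) (Units.ext hab.2)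
    · rintro ⟨⟨⟨a, b⟩, hne⟩, ha⟩
      simp only at ha hne
      exact ⟨(Units.mk0 a ha, Units.mk0 b hne), by simp⟩
  have hC := quot_card_congr (Equiv.ofBijective _ hχC)
    (fun a b : (ZMod 3)ˣ × (ZMod p)ˣ => (u3, up) * a = b)
    (fun a b : {x : {y : ZMod 3 × ZMod p // (y : ZMod 3 × ZMod p).2 ≠ 0} //
        ¬ (x : ZMod 3 × ZMod p).1 = 0} =>
      (g3, gp) * ((a : {y : ZMod 3 × ZMod p // (y : ZMod 3 × ZMod p).2 ≠ 0}) : ZMod 3 × ZMod p)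
        = ↑↑b) (by
      intro a a'
      simp [Equiv.ofBijective, Units.ext_iff, Prod.ext_iff, hu3, hup])
  rw [card_quot_group (u3, up)] at hC
  rw [← hC]
  -- now pure cardinal arithmetic
  have c3 : Nat.card (ZMod 3)ˣ = 2 := by
    rw [Nat.card_eq_fintype_card, ZMod.card_units]
  have cp : Nat.card (ZMod p)ˣ = p - 1 := by
    rw [Nat.card_eq_fintype_card, ZMod.card_units]
  have cprod : Nat.card ((ZMod 3)ˣ × (ZMod p)ˣ) = 2 * (p - 1) := by
    rw [Nat.card_prod, c3, cp]
  rw [c3, cp, cprod, hord3, hordp, Prod.orderOf_mk]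
  rw [add_assoc]

end AuxCycleCount

/-- Let `p > 3` be prime and `r` an integer with `1 ≤ r ≤ 3p-1` and
`gcd(r,3p) = 1`. Then `c(U_{3p}, a_{3p,r,0})` equals `2 + 3(p-1)/|r|_p` if `r ≡ 1 (mod 3)`;
`1 + 2(p-1)/|r|_p` if `r ≡ 2 (mod 3)` and `|r|_p` is odd; and `1 + 3(p-1)/|r|_p` if
`r ≡ 2 (mod 3)` and `|r|_p` is even. -/
theorem cycleCount_U3p (p : ℕ) (hp : p.Prime) (hp3 : 3 < p) (r : ℤ)
    (hr1 : 1 ≤ r) (hr2 : r ≤ 3 * (p : ℤ) - 1) (hg : Int.gcd r (3 * (p : ℤ)) = 1) :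
    (r ≡ 1 [ZMOD 3] →
      cycleCount (dihedralAut (3 * p) r 0) (Un (3 * p)) = 2 + 3 * (p - 1) / ordMod p r) ∧
    (r ≡ 2 [ZMOD 3] → Odd (ordMod p r) →
      cycleCount (dihedralAut (3 * p) r 0) (Un (3 * p)) = 1 + 2 * (p - 1) / ordMod p r) ∧
    (r ≡ 2 [ZMOD 3] → Even (ordMod p r) →
      cycleCount (dihedralAut (3 * p) r 0) (Un (3 * p)) = 1 + 3 * (p - 1) / ordMod p r) := by
  haveI : Fact p.Prime := ⟨hp⟩
  have h3 : (r : ZMod 3) ≠ 0 := by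
    intro h
    rw [ZMod.intCast_zmod_eq_zero_iff_dvd] at h
    have h' : (3 : ℤ) ∣ (Int.gcd r (3 * (p : ℤ)) : ℤ) := Int.dvd_coe_gcd h ⟨p, by push_cast; ring⟩
    rw [hg] at h'
    norm_num at h'
  have hpr : (r : ZMod p) ≠ 0 := by
    intro h
    rw [ZMod.intCast_zmod_eq_zero_iff_dvd] at h
    have h' : (p : ℤ) ∣ (Int.gcd r (3 * (p : ℤ)) : ℤ) := Int.dvd_coe_gcd h ⟨3, by push_cast; ring⟩
    rw [hg] at h'
    have := Int.le_of_dvd (by norm_num) h'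
    omega
  have main := main_count p hp hp3 r h3 hpr
  set d := ordMod p r with hd
  set up : (ZMod p)ˣ := Units.mk0 ((r : ZMod p)) hpr with hup
  have hdu : d = orderOf up := by rw [hd, ordMod, ← orderOf_units, Units.val_mk0]
  have hdpos : 0 < d := by rw [hdu]; exact orderOf_pos up
  have hdvd : d ∣ p - 1 := by
    rw [hdu]
    have := orderOf_dvd_card (x := up)
    rwa [ZMod.card_units] at this
  obtain ⟨k, hk⟩ := hdvd
  have e1 : d * k / d = k := Nat.mul_div_cancel_left k hdpos
  have e2 : 2 * (d * k) / d = 2 * k := by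
    rw [show 2 * (d * k) = d * (2 * k) by ring]
    exact Nat.mul_div_cancel_left _ hdpos
  have e3 : 3 * (d * k) / d = 3 * k := by
    rw [show 3 * (d * k) = d * (3 * k) by ring]
    exact Nat.mul_div_cancel_left _ hdpos
  refine ⟨?_, ?_, ?_⟩
  · intro h1
    have hr3 : (r : ZMod 3) = 1 := by
      have := (ZMod.intCast_eq_intCast_iff r 1 3).mpr h1
      simpa using this
    have he : ordMod 3 r = 1 := by rw [ordMod, hr3, orderOf_one]
    rw [main, he, hk, Nat.lcm_one_left, Nat.div_one, e1, e2, e3]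
    omega
  · intro h2 hodd
    have hr3 : (r : ZMod 3) = 2 := by
      have := (ZMod.intCast_eq_intCast_iff r 2 3).mpr h2
      simpa using this
    haveI : Fact (Nat.Prime 2) := ⟨Nat.prime_two⟩
    have he : ordMod 3 r = 2 := by
      rw [ordMod, hr3]
      refine orderOf_eq_prime ?_ ?_ <;> decide
    have hlcm : Nat.lcm 2 d = 2 * d := (Nat.coprime_two_left.mpr hodd).lcm_eq_mul
    have e4 : 2 * (d * k) / (2 * d) = k := by
      rw [show 2 * (d * k) = (2 * d) * k by ring]
      exact Nat.mul_div_cancel_left _ (by omega)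
    rw [main, he, hk, hlcm, e1, e2, e4]
    omega
  · intro h2 heven
    have hr3 : (r : ZMod 3) = 2 := by
      have := (ZMod.intCast_eq_intCast_iff r 2 3).mpr h2
      simpa using this
    haveI : Fact (Nat.Prime 2) := ⟨Nat.prime_two⟩
    have he : ordMod 3 r = 2 := by
      rw [ordMod, hr3]
      refine orderOf_eq_prime ?_ ?_ <;> decide
    have hlcm : Nat.lcm 2 d = d :=
      Nat.dvd_antisymm (Nat.lcm_dvd heven.two_dvd dvd_rfl) (Nat.dvd_lcm_right 2 d)
    rw [main, he, hk, hlcm, e1, e2, e3]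
    omega
end

section
/- Let p > 3 be a prime, let t ∈ {1, 3, p, 3p}, and let r be an integer with 1 ≤ r ≤ 3p − 1 and gcd(r, 3p) = 1. Then Λ(1, r, t) = ∅ if r ≡ 1 (mod 3), and Λ(1, r, t) = {ℓ ∈ Δ(|r|_p) : ℓ is odd} if r ≡ 2 (mod 3). -/
/-- `Λ(d,r,t) := {ℓ > 0 : ℓ ∣ |r|_{3p}/gcd(κ(d,r,t),|r|_{3p}) and gcd(r^{ℓκ(d,r,t)} - 1, 3p) = d}`,
for a divisor `d` of `3p`. -/
noncomputable def Lam (p d : ℕ) (r t : ℤ) : Set ℕ :=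
  {ℓ | 0 < ℓ ∧ ℓ ∣ ordMod (3 * p) r / Nat.gcd (kappa d r t) (ordMod (3 * p) r) ∧
    Int.gcd (r ^ (ℓ * kappa d r t) - 1) (3 * (p : ℤ)) = d}

/-- `Δ(m) := {ℓ : 0 < ℓ < m and ℓ ∣ m}`. -/
def Delta (m : ℕ) : Set ℕ := {ℓ | 0 < ℓ ∧ ℓ < m ∧ ℓ ∣ m}

lemma ord_dvd_iff (m : ℕ) (r : ℤ) (k : ℕ) : ordMod m r ∣ k ↔ (m:ℤ) ∣ r^k - 1 := by
  rw [ordMod, orderOf_dvd_iff_pow_eq_one,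
    show ((r:ZMod m))^k = ((r^k : ℤ) : ZMod m) by push_cast; ring,
    ← sub_eq_zero,
    show ((r^k:ℤ):ZMod m) - 1 = ((r^k - 1 : ℤ) : ZMod m) by push_cast; ring,
    ZMod.intCast_zmod_eq_zero_iff_dvd]

lemma ord_pos (m : ℕ) (r : ℤ) (h : Int.gcd r m = 1) (hm : 0 < m) : 0 < ordMod m r := by
  have : NeZero m := ⟨hm.ne'⟩
  have hu : IsUnit (r : ZMod m) := by
    obtain ⟨a, b, hab⟩ := Int.isCoprime_iff_gcd_eq_one.mpr h
    refine IsUnit.of_mul_eq_one ((a : ZMod m)) ?_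
    have := congrArg (fun z : ℤ => (z : ZMod m)) hab
    push_cast at this
    simpa [mul_comm] using this
  obtain ⟨u, hu⟩ := hu
  rw [ordMod, ← hu, orderOf_units]
  exact orderOf_pos u

lemma kappa_one (r t : ℤ) : kappa 1 r t = 1 := by
  have h1 : ordMod 1 r = 1 := by
    rw [ordMod, orderOf_eq_one_iff]
    exact Subsingleton.elim _ _
  simp [kappa, h1]

/-- Let `p > 3` be prime, `t ∈ {1, 3, p, 3p}`, and `r` an integer with
`1 ≤ r ≤ 3p-1` and `gcd(r,3p) = 1`. Then `Λ(1,r,t) = ∅` if `r ≡ 1 (mod 3)`, and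
`Λ(1,r,t) = {ℓ ∈ Δ(|r|_p) : ℓ odd}` if `r ≡ 2 (mod 3)`. -/
theorem Lam_one_eq (p : ℕ) (hp : p.Prime) (hp3 : 3 < p) (t : ℤ)
    (ht : t = 1 ∨ t = 3 ∨ t = (p : ℤ) ∨ t = 3 * (p : ℤ)) (r : ℤ)
    (hr1 : 1 ≤ r) (hr2 : r ≤ 3 * (p : ℤ) - 1) (hg : Int.gcd r (3 * (p : ℤ)) = 1) :
    (r ≡ 1 [ZMOD 3] → Lam p 1 r t = ∅) ∧
    (r ≡ 2 [ZMOD 3] → Lam p 1 r t = {ℓ ∈ Delta (ordMod p r) | Odd ℓ}) := by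
  set N := ordMod (3 * p) r with hN
  set e := ordMod p r with he
  have h3Z : Prime (3 : ℤ) := Int.prime_three
  have hpZ : Prime ((p : ℤ)) := Int.prime_iff_natAbs_prime.mpr (by simpa using hp)
  have h3p : ¬ (3:ℤ) ∣ (p:ℤ) := by
    rw [show (3:ℤ) = ((3:ℕ):ℤ) by norm_num, Int.natCast_dvd_natCast]
    intro h
    rcases (Nat.Prime.eq_one_or_self_of_dvd hp 3 h) with h' | h' <;> omega
  have hmem : ∀ ℓ : ℕ, ℓ ∈ Lam p 1 r t ↔
      (0 < ℓ ∧ ℓ ∣ N ∧ Int.gcd (r ^ ℓ - 1) (3 * (p : ℤ)) = 1) := by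
    intro ℓ
    simp [Lam, kappa_one, ← hN]
  have hgcd1 : ∀ a : ℤ, Int.gcd a (3 * (p:ℤ)) = 1 ↔ (¬ (3:ℤ) ∣ a ∧ ¬ (p:ℤ) ∣ a) := by
    intro a
    rw [← Int.isCoprime_iff_gcd_eq_one, isCoprime_comm, IsCoprime.mul_left_iff,
      h3Z.coprime_iff_not_dvd, hpZ.coprime_iff_not_dvd]
  have hcast : ((3 * p : ℕ) : ℤ) = 3 * (p:ℤ) := by push_cast; ring
  have hNpos : 0 < N := by
    refine ord_pos (3*p) r ?_ (by positivity)
    rwa [hcast]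
  have hdvd3p : ∀ k : ℕ, N ∣ k ↔ (3 * (p:ℤ)) ∣ r ^ k - 1 := by
    intro k; rw [hN, ord_dvd_iff, hcast]
  have heN : e ∣ N := by
    rw [he, ord_dvd_iff]
    exact dvd_trans (dvd_mul_left _ _) ((hdvd3p N).mp dvd_rfl)
  have hepos : 0 < e := Nat.pos_of_dvd_of_pos heN hNpos
  constructor
  · -- r ≡ 1 [ZMOD 3]
    intro hr
    ext ℓ
    simp only [hmem, Set.mem_empty_iff_false, iff_false, not_and]
    intro _ _ hgc
    have h3dvd : (3:ℤ) ∣ r ^ ℓ - 1 := by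
      have : ordMod 3 r = 1 := by
        have hcast3 : (r : ZMod 3) = 1 := by
          have := (ZMod.intCast_eq_intCast_iff r 1 3).mpr (by exact_mod_cast hr)
          simpa using this
        rw [ordMod, hcast3, orderOf_one]
      have := (ord_dvd_iff 3 r ℓ).mp (this ▸ one_dvd ℓ)
      exact_mod_cast this
    exact ((hgcd1 _).mp hgc).1 h3dvd
  · -- r ≡ 2 [ZMOD 3]
    intro hr
    have h3r : ordMod 3 r = 2 := by
      have hcast3 : (r : ZMod 3) = 2 := by
        have := (ZMod.intCast_eq_intCast_iff r 2 3).mpr (by exact_mod_cast hr)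
        simpa using this
      rw [ordMod, hcast3]
      exact orderOf_eq_prime (by decide) (by decide)
    have hdvd3 : ∀ k : ℕ, 2 ∣ k ↔ (3:ℤ) ∣ r ^ k - 1 := by
      intro k
      rw [← h3r, ord_dvd_iff]
      norm_num
    have hdvdp : ∀ k : ℕ, e ∣ k ↔ (p:ℤ) ∣ r ^ k - 1 := fun k => ord_dvd_iff p r k
    have hN2e : N ∣ 2 * e := by
      rw [hdvd3p]
      have hcop : IsCoprime (3:ℤ) (p:ℤ) := h3Z.coprime_iff_not_dvd.mpr h3p
      refine IsCoprime.mul_dvd hcop ?_ ?_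
      · exact (hdvd3 (2*e)).mp ⟨e, rfl⟩
      · exact (hdvdp (2*e)).mp ⟨2, by ring⟩
    ext ℓ
    simp only [hmem, Set.mem_setOf_eq, Delta, Set.mem_sep_iff]
    constructor
    · rintro ⟨hl, hlN, hgc⟩
      obtain ⟨h3n, hpn⟩ := (hgcd1 _).mp hgc
      have hodd : Odd ℓ := by
        rcases Nat.even_or_odd ℓ with hev | hod
        · exact absurd ((hdvd3 ℓ).mp hev.two_dvd) h3n
        · exact hod
      have hle : ℓ ∣ e := by
        have : ℓ ∣ 2 * e := hlN.trans hN2e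
        exact (Nat.Coprime.dvd_of_dvd_mul_left (Nat.coprime_two_right.mpr hodd) this)
      have hne : ℓ ≠ e := by
        intro h
        exact hpn ((hdvdp ℓ).mp (h ▸ dvd_rfl))
      exact ⟨⟨hl, lt_of_le_of_ne (Nat.le_of_dvd hepos hle) hne, hle⟩, hodd⟩
    · rintro ⟨⟨hl, hlt, hle⟩, hodd⟩
      refine ⟨hl, hle.trans heN, (hgcd1 _).mpr ⟨?_, ?_⟩⟩
      · intro h
        have := (hdvd3 ℓ).mpr h
        simp [Nat.odd_iff] at hodd
        omega
      · intro h
        have := (hdvdp ℓ).mpr h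
        have := Nat.le_of_dvd hl this
        omega
end

section
/- Let p > 3 be a prime, let t ∈ {1, 3, p, 3p}, and let r be an integer with 1 ≤ r ≤ 3p − 1 and gcd(r, 3p) = 1. Then Λ(3, r, t) = Δ(|r|_p) if r ≡ 1 (mod 3) and t ∈ {3, 3p}; Λ(3, r, t) = Δ(|r|_p / gcd(3, |r|_p)) if r ≡ 1 (mod 3) and t ∈ {1, p}; and Λ(3, r, t) = Δ(|r|_p / gcd(2, |r|_p)) if r ≡ 2 (mod 3). -/
lemma pow_cond (m : ℕ) (r : ℤ) (k : ℕ) :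
    ((m:ℤ) ∣ r ^ k - 1) ↔ (r : ZMod m) ^ k = 1 := by
  rw [← ZMod.intCast_zmod_eq_zero_iff_dvd]
  push_cast
  rw [sub_eq_zero]

lemma ordMod_mul' (a b : ℕ) (h : Nat.Coprime a b) (r : ℤ) :
    orderOf ((r : ZMod (a*b))) = Nat.lcm (orderOf (r : ZMod a)) (orderOf (r : ZMod b)) := by
  have e := ZMod.chineseRemainder h
  have h1 := orderOf_injective e.toMulEquiv.toMonoidHom e.injective ((r : ZMod (a*b)))
  have h2 : e ((r : ZMod (a*b))) = ((r : ZMod a), (r : ZMod b)) := by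
    have h3 := map_intCast (e : ZMod (a*b) →+* ZMod a × ZMod b) r
    rw [show ((r : ZMod a × ZMod b)) = ((r:ZMod a),(r:ZMod b)) from
      Prod.ext (Prod.fst_intCast r) (Prod.snd_intCast r)] at h3
    exact h3
  rw [← h1]
  simp only [RingEquiv.toMulEquiv_eq_coe, MulEquiv.coe_toMonoidHom, RingEquiv.coe_toMulEquiv]
  rw [h2, Prod.orderOf]

lemma gcd_eq_three_iff {p : ℕ} (hp : p.Prime) (hp3 : 3 < p) (x : ℤ) :
    Int.gcd x (3 * (p:ℤ)) = 3 ↔ ((3:ℤ) ∣ x ∧ ¬ (p:ℤ) ∣ x) := by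
  constructor
  · intro h
    constructor
    · have h1 : ((Int.gcd x (3*(p:ℤ)) : ℕ) : ℤ) ∣ x := Int.gcd_dvd_left _ _
      rw [h] at h1; exact_mod_cast h1
    · intro hpx
      have h1 : (p:ℤ) ∣ ((Int.gcd x (3*(p:ℤ)) : ℕ) : ℤ) :=
        Int.dvd_coe_gcd hpx ⟨3, by ring⟩
      rw [h] at h1
      have h2 : p ∣ 3 := by exact_mod_cast h1
      have := Nat.le_of_dvd (by norm_num) h2
      omega
  · rintro ⟨h3, hpn⟩
    have hgd : ((Int.gcd x (3*(p:ℤ)) : ℕ) : ℤ) ∣ 3 * (p:ℤ) := Int.gcd_dvd_right _ _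
    have hgd' : Int.gcd x (3*(p:ℤ)) ∣ 3 * p := by exact_mod_cast hgd
    have h3g : 3 ∣ Int.gcd x (3*(p:ℤ)) := by
      have h4 : (3:ℤ) ∣ ((Int.gcd x (3*(p:ℤ)) : ℕ) : ℤ) := Int.dvd_coe_gcd h3 ⟨p, rfl⟩
      exact_mod_cast h4
    obtain ⟨k, hk⟩ := h3g
    rw [hk] at hgd' ⊢
    have hkp : k ∣ p := (Nat.mul_dvd_mul_iff_left (by norm_num : 0 < 3)).1 hgd'
    rcases (Nat.Prime.eq_one_or_self_of_dvd hp k hkp) with h1 | h1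
    · simp [h1]
    · exfalso; apply hpn
      have h5 : ((Int.gcd x (3*(p:ℤ)) : ℕ) : ℤ) ∣ x := Int.gcd_dvd_left _ _
      rw [hk, h1] at h5
      exact dvd_trans ⟨3, by push_cast; ring⟩ h5

lemma delta_eq (m : ℕ) (hm : 0 < m) :
    {ℓ : ℕ | 0 < ℓ ∧ ℓ ∣ m ∧ ¬ m ∣ ℓ} = Delta m := by
  ext ℓ
  simp only [Set.mem_setOf_eq, Delta]
  constructor
  · rintro ⟨h0, hd, hnd⟩
    refine ⟨h0, lt_of_le_of_ne (Nat.le_of_dvd hm hd) ?_, hd⟩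
    rintro rfl; exact hnd dvd_rfl
  · rintro ⟨h0, hlt, hd⟩
    exact ⟨h0, hd, fun h => absurd (Nat.le_of_dvd h0 h) (not_le.2 hlt)⟩

/-- Let `p > 3` be prime, `t ∈ {1, 3, p, 3p}`, and `r` an integer with
`1 ≤ r ≤ 3p-1` and `gcd(r,3p) = 1`. Then `Λ(3,r,t) = Δ(|r|_p)` if `r ≡ 1 (mod 3)` and
`t ∈ {3, 3p}`; `Λ(3,r,t) = Δ(|r|_p / gcd(3,|r|_p))` if `r ≡ 1 (mod 3)` and `t ∈ {1, p}`;
and `Λ(3,r,t) = Δ(|r|_p / gcd(2,|r|_p))` if `r ≡ 2 (mod 3)`. -/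
theorem Lam_three_eq (p : ℕ) (hp : p.Prime) (hp3 : 3 < p) (t : ℤ)
    (ht : t = 1 ∨ t = 3 ∨ t = (p : ℤ) ∨ t = 3 * (p : ℤ)) (r : ℤ)
    (hr1 : 1 ≤ r) (hr2 : r ≤ 3 * (p : ℤ) - 1) (hg : Int.gcd r (3 * (p : ℤ)) = 1) :
    (r ≡ 1 [ZMOD 3] → (t = 3 ∨ t = 3 * (p : ℤ)) → Lam p 3 r t = Delta (ordMod p r)) ∧
    (r ≡ 1 [ZMOD 3] → (t = 1 ∨ t = (p : ℤ)) →
      Lam p 3 r t = Delta (ordMod p r / Nat.gcd 3 (ordMod p r))) ∧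
    (r ≡ 2 [ZMOD 3] → Lam p 3 r t = Delta (ordMod p r / Nat.gcd 2 (ordMod p r))) := by
  haveI : Fact p.Prime := ⟨hp⟩
  have hcop : Nat.Coprime 3 p := (Nat.coprime_primes (by norm_num) hp).2 (by omega)
  set e := ordMod p r with hedef
  have hrp : (r : ZMod p) ≠ 0 := by
    intro h
    have hd : (p:ℤ) ∣ r := (ZMod.intCast_zmod_eq_zero_iff_dvd r p).1 h
    have h1 : (p:ℤ) ∣ ((Int.gcd r (3*(p:ℤ)) : ℕ) : ℤ) := Int.dvd_coe_gcd hd ⟨3, by ring⟩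
    rw [hg] at h1
    have h2 : p ∣ 1 := by exact_mod_cast h1
    have := Nat.le_of_dvd one_pos h2
    omega
  have he : 0 < e := by
    rw [hedef, ordMod]
    apply orderOf_pos_iff.2
    exact isOfFinOrder_iff_pow_eq_one.2 ⟨p - 1, by omega, ZMod.pow_card_sub_one_eq_one hrp⟩
  have hN : ordMod (3*p) r = Nat.lcm (ordMod 3 r) e := ordMod_mul' 3 p hcop r
  have cond_iff : ∀ k : ℕ, (Int.gcd (r ^ k - 1) (3*(p:ℤ)) = 3 ↔ (ordMod 3 r ∣ k ∧ ¬ e ∣ k)) := by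
    intro k
    rw [gcd_eq_three_iff hp hp3]
    constructor
    · rintro ⟨h3, hpd⟩
      refine ⟨orderOf_dvd_iff_pow_eq_one.2 ((pow_cond 3 r k).1 (by exact_mod_cast h3)), ?_⟩
      intro hek
      exact hpd ((pow_cond p r k).2 (orderOf_dvd_iff_pow_eq_one.1 hek))
    · rintro ⟨h3, hpd⟩
      refine ⟨by exact_mod_cast (pow_cond 3 r k).2 (orderOf_dvd_iff_pow_eq_one.1 h3), ?_⟩
      intro hd
      exact hpd (orderOf_dvd_iff_pow_eq_one.2 ((pow_cond p r k).1 hd))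
  refine ⟨?_, ?_, ?_⟩
  -- Case 1 : r ≡ 1 mod 3, t ∈ {3, 3p}
  · intro hm ht'
    have hr3 : (r : ZMod 3) = 1 := by
      have := (ZMod.intCast_eq_intCast_iff r 1 3).2 (by exact_mod_cast hm); simpa using this
    have he3 : ordMod 3 r = 1 := by rw [ordMod, hr3, orderOf_one]
    have hS : Spoly (ordMod 3 r) r = 1 := by simp [he3, Spoly]
    have hκ : kappa 3 r t = 1 := by
      rw [kappa, hS, he3, mul_one, mul_one]
      have hgcd : Int.gcd ((3:ℕ):ℤ) t = 3 := by
        rcases ht' with rfl | rfl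
        · norm_num [Int.gcd]
        · rw [Int.gcd_eq_natAbs_left_iff_dvd (a := ((3:ℕ):ℤ)) (b := 3 * (p:ℤ)) |>.2 ⟨(p:ℤ), by push_cast; ring⟩]; simp
      rw [hgcd]
    rw [← delta_eq e he]
    ext ℓ
    simp only [Lam, Set.mem_setOf_eq]
    constructor
    · rintro ⟨h0, hdvd, hcond⟩
      rw [cond_iff, hκ, mul_one, he3] at hcond
      rw [hN, he3, Nat.lcm_one_left, hκ, Nat.gcd_one_left, Nat.div_one] at hdvd
      exact ⟨h0, hdvd, hcond.2⟩
    · rintro ⟨h0, hdvd, hnd⟩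
      refine ⟨h0, ?_, ?_⟩
      · rw [hN, he3, Nat.lcm_one_left, hκ, Nat.gcd_one_left, Nat.div_one]
        exact hdvd
      · rw [cond_iff, hκ, mul_one, he3]
        exact ⟨one_dvd ℓ, hnd⟩
  -- Case 2 : r ≡ 1 mod 3, t ∈ {1, p}
  · intro hm ht'
    have hr3 : (r : ZMod 3) = 1 := by
      have := (ZMod.intCast_eq_intCast_iff r 1 3).2 (by exact_mod_cast hm); simpa using this
    have he3 : ordMod 3 r = 1 := by rw [ordMod, hr3, orderOf_one]
    have hS : Spoly (ordMod 3 r) r = 1 := by simp [he3, Spoly]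
    have hκ : kappa 3 r t = 3 := by
      rw [kappa, hS, he3, mul_one, mul_one]
      have hgcd : Int.gcd ((3:ℕ):ℤ) t = 1 := by
        rcases ht' with rfl | rfl
        · norm_num [Int.gcd]
        · simpa [Int.gcd] using hcop
      rw [hgcd]
    set M := e / Nat.gcd 3 e with hMdef
    have hgpos : 0 < Nat.gcd 3 e := Nat.gcd_pos_of_pos_right 3 he
    have hgdvd : Nat.gcd 3 e ∣ e := Nat.gcd_dvd_right 3 e
    have hM : 0 < M := Nat.div_pos (Nat.le_of_dvd he hgdvd) hgpos
    have key : ∀ ℓ : ℕ, ℓ ∣ M → (e ∣ ℓ * 3 ↔ M ∣ ℓ) := by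
      intro ℓ _
      by_cases h3e : 3 ∣ e
      · have hg3 : Nat.gcd 3 e = 3 := Nat.gcd_eq_left h3e
        have heM : e = 3 * M := by
          rw [hMdef, hg3, Nat.mul_div_cancel' h3e]
        rw [heM, mul_comm ℓ 3, Nat.mul_dvd_mul_iff_left (by norm_num : 0 < 3)]
      · have hg1 : Nat.gcd 3 e = 1 := (Nat.Prime.coprime_iff_not_dvd (by norm_num)).2 h3e
        have heM : M = e := by rw [hMdef, hg1, Nat.div_one]
        rw [heM]
        constructor
        · intro h
          exact (Nat.Coprime.dvd_of_dvd_mul_right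
            ((Nat.coprime_comm).1 ((Nat.Prime.coprime_iff_not_dvd (by norm_num)).2 h3e)) h)
        · intro h
          exact dvd_trans h ⟨3, rfl⟩
    rw [← delta_eq M hM]
    ext ℓ
    simp only [Lam, Set.mem_setOf_eq]
    constructor
    · rintro ⟨h0, hdvd, hcond⟩
      rw [cond_iff, hκ, he3] at hcond
      rw [hN, he3, Nat.lcm_one_left, hκ] at hdvd
      refine ⟨h0, hdvd, ?_⟩
      rw [← key ℓ hdvd]
      exact hcond.2
    · rintro ⟨h0, hdvd, hnd⟩
      refine ⟨h0, ?_, ?_⟩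
      · rw [hN, he3, Nat.lcm_one_left, hκ]; exact hdvd
      · rw [cond_iff, hκ, he3]
        exact ⟨one_dvd _, by rw [key ℓ hdvd]; exact hnd⟩
  -- Case 3 : r ≡ 2 mod 3
  · intro hm
    have hr3 : (r : ZMod 3) = 2 := by
      have := (ZMod.intCast_eq_intCast_iff r 2 3).2 (by exact_mod_cast hm)
      simpa using this
    have he3 : ordMod 3 r = 2 := by
      rw [ordMod, hr3]; exact orderOf_eq_prime (by decide) (by decide)
    have hS : Spoly (ordMod 3 r) r = 1 + r := by
      simp [he3, Spoly, Finset.sum_range_succ]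
    have h12 : (3:ℤ) ∣ 1 + r := by
      have h := Int.ModEq.dvd hm
      omega
    have hκ : kappa 3 r t = 2 := by
      rw [kappa, hS, he3]
      rw [Int.gcd_eq_natAbs_left_iff_dvd.2 (by push_cast; exact Dvd.dvd.mul_left h12 t :
        ((3:ℕ):ℤ) ∣ t * (1 + r))]
      simp
    set M := e / Nat.gcd 2 e with hMdef
    have hgpos : 0 < Nat.gcd 2 e := Nat.gcd_pos_of_pos_right 2 he
    have hgdvd : Nat.gcd 2 e ∣ e := Nat.gcd_dvd_right 2 e
    have hM : 0 < M := Nat.div_pos (Nat.le_of_dvd he hgdvd) hgpos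
    have hNgcd : Nat.gcd 2 (Nat.lcm 2 e) = 2 := Nat.gcd_eq_left (Nat.dvd_lcm_left 2 e)
    have hNdiv : Nat.lcm 2 e / 2 = M := by
      by_cases h2e : 2 ∣ e
      · have hlcm : Nat.lcm 2 e = e :=
          Nat.dvd_antisymm (Nat.lcm_dvd h2e dvd_rfl) (Nat.dvd_lcm_right 2 e)
        rw [hlcm, hMdef, Nat.gcd_eq_left h2e]
      · have hco : Nat.Coprime 2 e := (Nat.Prime.coprime_iff_not_dvd (by norm_num)).2 h2e
        rw [Nat.Coprime.lcm_eq_mul hco, Nat.mul_div_cancel_left e (by norm_num : 0 < 2),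
          hMdef, hco, Nat.div_one]
    have key : ∀ ℓ : ℕ, ℓ ∣ M → (e ∣ ℓ * 2 ↔ M ∣ ℓ) := by
      intro ℓ _
      by_cases h2e : 2 ∣ e
      · have hg2 : Nat.gcd 2 e = 2 := Nat.gcd_eq_left h2e
        have heM : e = 2 * M := by rw [hMdef, hg2, Nat.mul_div_cancel' h2e]
        rw [heM, mul_comm ℓ 2, Nat.mul_dvd_mul_iff_left (by norm_num : 0 < 2)]
      · have hco : Nat.Coprime 2 e := (Nat.Prime.coprime_iff_not_dvd (by norm_num)).2 h2e
        have heM : M = e := by rw [hMdef, hco, Nat.div_one]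
        rw [heM]
        constructor
        · intro h
          exact Nat.Coprime.dvd_of_dvd_mul_right (Nat.coprime_comm.1 hco) h
        · intro h
          exact dvd_trans h ⟨2, rfl⟩
    rw [← delta_eq M hM]
    ext ℓ
    simp only [Lam, Set.mem_setOf_eq]
    constructor
    · rintro ⟨h0, hdvd, hcond⟩
      rw [cond_iff, hκ, he3] at hcond
      rw [hN, he3, hκ, hNgcd, hNdiv] at hdvd
      refine ⟨h0, hdvd, ?_⟩
      rw [← key ℓ hdvd]
      exact hcond.2
    · rintro ⟨h0, hdvd, hnd⟩
      refine ⟨h0, ?_, ?_⟩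
      · rw [hN, he3, hκ, hNgcd, hNdiv]; exact hdvd
      · rw [cond_iff, hκ, he3]
        exact ⟨⟨ℓ, mul_comm ℓ 2⟩, by rw [key ℓ hdvd]; exact hnd⟩
end
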